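/- arXiv:2602.23911 — 4 statements merged into one kernel-verified Lean document; each statement's English description precedes it below -/
import Mathlib

section
/- Let (W_1, …, W_n) and (Y_1, …, Y_n) be real-valued square-integrable random variables on a common probability space such that the random vector (W_1, …, W_n) is independent of (Y_1, …, Y_n) and E[W_i] = 0 for every i. Let S be a countable index set and let w_i : S → ℝ satisfy sup_{i,s} |w_i(s)| ≤ C_w for some C_w ∈ (1, ∞). Define the pseudometric d(s,t) = ( (1/n) Σ_{i=1}^n (w_i(s) − w_i(t))² )^{1/2} and σ_n² = (1/n) Σ_{i,j=1}^n |Cov[W_i, W_j]|. Fix ε > 0 and suppose there exist N_ε ∈ ℕ and points s_1, …, s_{N_ε} ∈ S such that every s ∈ S satisfies d(s, s_j) ≤ ε for some j. Then there is a constant A depending only on C_w and max_{1 ≤ i ≤ n} E[W_i²] such that E[ sup_{s ∈ S} | n^{−1/2} Σ_{i=1}^n w_i(s)·W_i·Y_i | ] ≤ A · max_{1 ≤ i ≤ n} E[Y_i²]^{1/2} · ( σ_n · N_ε^{1/2} + ε · n^{1/2} ). -/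
open MeasureTheory ProbabilityTheory

/-- Covariance of two real random variables: `Cov[f,g] = E[fg] − E[f]E[g]`. -/
noncomputable def cov {Ω : Type*} [MeasurableSpace Ω] (μ : Measure Ω) (f g : Ω → ℝ) : ℝ :=
  (∫ ω, f ω * g ω ∂μ) - (∫ ω, f ω ∂μ) * (∫ ω, g ω ∂μ)

section Aux
variable {Ω : Type} [MeasurableSpace Ω] {μ : Measure Ω}

lemma aux_integrable_mul {f g : Ω → ℝ} (hf : MemLp f 2 μ) (hg : MemLp g 2 μ) :
    Integrable (fun ω => f ω * g ω) μ := by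
  refine ((hf.integrable_sq.add hg.integrable_sq).div_const 2).mono'
    (hf.aestronglyMeasurable.mul hg.aestronglyMeasurable) (ae_of_all _ fun ω => ?_)
  simp only [Pi.add_apply, Real.norm_eq_abs, abs_mul]
  nlinarith [sq_nonneg (|f ω| - |g ω|), sq_abs (f ω), sq_abs (g ω), abs_nonneg (f ω),
    abs_nonneg (g ω)]

lemma aux_abs_integral_mul_le {f g : Ω → ℝ} (hf : MemLp f 2 μ) (hg : MemLp g 2 μ) :
    |∫ ω, f ω * g ω ∂μ| ≤ ((∫ ω, f ω ^ 2 ∂μ) + ∫ ω, g ω ^ 2 ∂μ) / 2 := by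
  have h1 : |∫ ω, f ω * g ω ∂μ| ≤ ∫ ω, |f ω * g ω| ∂μ := by
    simpa only [Real.norm_eq_abs] using
      norm_integral_le_integral_norm (μ := μ) (fun ω => f ω * g ω)
  refine h1.trans ?_
  have h2 : ∫ ω, |f ω * g ω| ∂μ ≤ ∫ ω, (f ω ^ 2 + g ω ^ 2) / 2 ∂μ := by
    refine integral_mono_of_nonneg (ae_of_all _ fun ω => abs_nonneg _)
      ((hf.integrable_sq.add hg.integrable_sq).div_const 2) (ae_of_all _ fun ω => ?_)
    simp only [abs_mul]
    nlinarith [sq_nonneg (|f ω| - |g ω|), sq_abs (f ω), sq_abs (g ω), abs_nonneg (f ω),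
      abs_nonneg (g ω)]
  refine h2.trans_eq ?_
  rw [integral_div, integral_add hf.integrable_sq hg.integrable_sq]

lemma aux_int_le_sqrt [IsProbabilityMeasure μ] {f : Ω → ℝ} (hf : MemLp f 2 μ)
    (h0 : 0 ≤ ∫ ω, f ω ∂μ) :
    ∫ ω, f ω ∂μ ≤ Real.sqrt (∫ ω, f ω ^ 2 ∂μ) := by
  have h := variance_nonneg f μ
  rw [variance_eq_sub hf] at h
  have h2 : (∫ ω, f ω ∂μ) ^ 2 ≤ ∫ ω, f ω ^ 2 ∂μ := by
    simpa [Pi.pow_apply] using h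
  exact (Real.le_sqrt h0 (le_trans (sq_nonneg _) h2)).2 h2

lemma aux_cs {m : ℕ} (f g : Fin m → ℝ) :
    |∑ i, f i * g i| ≤ Real.sqrt (∑ i, f i ^ 2) * Real.sqrt (∑ i, g i ^ 2) := by
  rw [← Real.sqrt_mul (Finset.sum_nonneg fun i _ => sq_nonneg _)]
  exact Real.abs_le_sqrt (Finset.sum_mul_sq_le_sq_mul_sq _ _ _)

end Aux

/-- There is a constant `A` depending only on `C_w` and `max_i E[W_i²]`
such that, for centered multipliers `(W_i)` independent of `(Y_i)`, uniformly bounded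
weights `w_i : S → ℝ` on a countable index set `S` admitting an ε-net `s_1,…,s_{N_ε}`
for the pseudometric `d(s,t) = ((1/n) Σ_i (w_i(s) − w_i(t))²)^{1/2}`,
`E[sup_s |n^{−1/2} Σ_i w_i(s) W_i Y_i|] ≤ A · max_i E[Y_i²]^{1/2} · (σ_n N_ε^{1/2} + ε n^{1/2})`,
where `σ_n² = (1/n) Σ_{i,j} |Cov[W_i,W_j]|`. -/
theorem multiplier_process_sup_expectation_bound :
    ∃ A : ℝ → ℝ → ℝ,
      ∀ (Ω : Type) [MeasurableSpace Ω] (μ : Measure Ω) [IsProbabilityMeasure μ]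
        (n : ℕ), 0 < n →
      ∀ (W Y : Fin n → Ω → ℝ),
        (∀ i, MemLp (W i) 2 μ) →
        (∀ i, MemLp (Y i) 2 μ) →
        IndepFun (fun ω => fun i => W i ω) (fun ω => fun i => Y i ω) μ →
        (∀ i, ∫ ω, W i ω ∂μ = 0) →
      ∀ (S : Type), Countable S →
      ∀ (w : Fin n → S → ℝ) (Cw : ℝ), 1 < Cw →
        (∀ i s, |w i s| ≤ Cw) →
      ∀ (ε : ℝ), 0 < ε →
      ∀ (Nε : ℕ) (pts : Fin Nε → S),
        (∀ s : S, ∃ j : Fin Nε,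
            Real.sqrt ((1 / (n : ℝ)) * ∑ i, (w i s - w i (pts j)) ^ 2) ≤ ε) →
        ∫ ω, (⨆ s : S, |(1 / Real.sqrt n) * ∑ i, w i s * W i ω * Y i ω|) ∂μ
          ≤ A Cw (⨆ i, ∫ ω, (W i ω) ^ 2 ∂μ)
              * Real.sqrt (⨆ i, ∫ ω, (Y i ω) ^ 2 ∂μ)
              * (Real.sqrt ((1 / (n : ℝ)) * ∑ i, ∑ j, |cov μ (W i) (W j)|)
                    * Real.sqrt Nε
                  + ε * Real.sqrt n) := by
  refine ⟨fun c m => c ^ 2 + Real.sqrt m, ?_⟩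
  intro Ω _ μ _ n hn W Y hW hY hInd hW0 S hS w Cw hCw hwb ε hε Nε pts hnet
  haveI hFinN : Nonempty (Fin n) := ⟨⟨0, hn⟩⟩
  have hn' : (0:ℝ) < n := by exact_mod_cast hn
  have hCw0 : (0:ℝ) ≤ Cw := le_of_lt (lt_trans one_pos hCw)
  set MW := ⨆ i, ∫ ω, (W i ω) ^ 2 ∂μ with hMWdef
  set MY := ⨆ i, ∫ ω, (Y i ω) ^ 2 ∂μ with hMYdef
  set σ2 := (1 / (n : ℝ)) * ∑ i, ∑ j, |cov μ (W i) (W j)| with hσ2def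
  show ∫ ω, (⨆ s : S, |(1 / Real.sqrt n) * ∑ i, w i s * W i ω * Y i ω|) ∂μ
      ≤ (Cw ^ 2 + Real.sqrt MW) * Real.sqrt MY
          * (Real.sqrt σ2 * Real.sqrt Nε + ε * Real.sqrt n)
  -- basic second-moment facts
  have hW2nn : ∀ i, 0 ≤ ∫ ω, (W i ω) ^ 2 ∂μ := fun i => integral_nonneg fun ω => sq_nonneg _
  have hY2nn : ∀ i, 0 ≤ ∫ ω, (Y i ω) ^ 2 ∂μ := fun i => integral_nonneg fun ω => sq_nonneg _
  have hMWle : ∀ i, ∫ ω, (W i ω) ^ 2 ∂μ ≤ MW := by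
    intro i; rw [hMWdef]
    exact le_ciSup (f := fun i => ∫ ω, (W i ω) ^ 2 ∂μ)
      (Set.Finite.bddAbove (Set.finite_range _)) i
  have hMYle : ∀ i, ∫ ω, (Y i ω) ^ 2 ∂μ ≤ MY := by
    intro i; rw [hMYdef]
    exact le_ciSup (f := fun i => ∫ ω, (Y i ω) ^ 2 ∂μ)
      (Set.Finite.bddAbove (Set.finite_range _)) i
  have hMW0 : 0 ≤ MW := le_trans (hW2nn (Classical.arbitrary _)) (hMWle _)
  have hMY0 : 0 ≤ MY := le_trans (hY2nn (Classical.arbitrary _)) (hMYle _)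
  have hσ20 : 0 ≤ σ2 := by
    rw [hσ2def]
    exact mul_nonneg (by positivity)
      (Finset.sum_nonneg fun i _ => Finset.sum_nonneg fun j _ => abs_nonneg _)
  -- independence of pairwise products
  have hIndp : ∀ (i k i' k' : Fin n),
      IndepFun (fun ω => W i ω * W k ω) (fun ω => Y i' ω * Y k' ω) μ := by
    intro i k i' k'
    exact hInd.comp
      (show Measurable fun v : Fin n → ℝ => v i * v k from
        (measurable_pi_apply i).mul (measurable_pi_apply k))
      (show Measurable fun v : Fin n → ℝ => v i' * v k' from
        (measurable_pi_apply i').mul (measurable_pi_apply k'))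
  have hWWint : ∀ i k, Integrable (fun ω => W i ω * W k ω) μ :=
    fun i k => aux_integrable_mul (hW i) (hW k)
  have hYYint : ∀ i k, Integrable (fun ω => Y i ω * Y k ω) μ :=
    fun i k => aux_integrable_mul (hY i) (hY k)
  have hWWYYint : ∀ i k i' k',
      Integrable (fun ω => (W i ω * W k ω) * (Y i' ω * Y k' ω)) μ :=
    fun i k i' k' => (hIndp i k i' k').integrable_mul (hWWint i k) (hYYint i' k')
  have hWWYYeq : ∀ i k i' k',
      ∫ ω, (W i ω * W k ω) * (Y i' ω * Y k' ω) ∂μ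
        = (∫ ω, W i ω * W k ω ∂μ) * ∫ ω, Y i' ω * Y k' ω ∂μ :=
    fun i k i' k' => (hIndp i k i' k').integral_fun_mul_eq_mul_integral (hWWint i k).1 (hYYint i' k').1
  -- the products W_i Y_i are in L²
  have hWY2 : ∀ i, MemLp (fun ω => W i ω * Y i ω) 2 μ := by
    intro i
    refine (memLp_two_iff_integrable_sq
      ((hW i).aestronglyMeasurable.mul (hY i).aestronglyMeasurable)).2 ?_
    exact (hWWYYint i i i i).congr (ae_of_all _ fun ω => by simp [Pi.pow_apply]; ring)
  -- the processes X_s are in L²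
  have hXmem : ∀ s : S,
      MemLp (fun ω => (1 / Real.sqrt n) * ∑ i, w i s * W i ω * Y i ω) 2 μ := by
    intro s
    have h1 : MemLp (fun ω => ∑ i, w i s * W i ω * Y i ω) 2 μ := by
      have h2 := memLp_finset_sum' (μ := μ) (p := 2) Finset.univ
        (f := fun (i : Fin n) (ω : Ω) => w i s * W i ω * Y i ω)
        (fun i _ => by
          simpa only [mul_assoc] using ((hWY2 i).const_mul (w i s)))
      rwa [show (∑ i : Fin n, fun ω => w i s * W i ω * Y i ω)
          = fun ω => ∑ i : Fin n, w i s * W i ω * Y i ω from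
        funext fun ω => by simp [Finset.sum_apply]] at h2
    exact h1.const_mul _
  -- value of E[X_s²]
  have hXsq_eq : ∀ s : S,
      ∫ ω, ((1 / Real.sqrt n) * ∑ i, w i s * W i ω * Y i ω) ^ 2 ∂μ
        = (1 / (n : ℝ)) * ∑ i, ∑ k, (w i s * w k s)
            * ((∫ ω, W i ω * W k ω ∂μ) * ∫ ω, Y i ω * Y k ω ∂μ) := by
    intro s
    have hpt : ∀ ω, ((1 / Real.sqrt n) * ∑ i, w i s * W i ω * Y i ω) ^ 2
        = (1 / (n : ℝ)) * ∑ i, ∑ k, (w i s * w k s)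
            * ((W i ω * W k ω) * (Y i ω * Y k ω)) := by
      intro ω
      rw [mul_pow, pow_two (∑ i : Fin n, w i s * W i ω * Y i ω), Finset.sum_mul_sum,
        div_pow, one_pow, Real.sq_sqrt hn'.le]
      congr 1
      exact Finset.sum_congr rfl fun i _ => Finset.sum_congr rfl fun k _ => by ring
    simp_rw [hpt]
    rw [integral_const_mul, integral_finset_sum _ (fun i _ =>
      integrable_finset_sum _ fun k _ => (hWWYYint i k i k).const_mul _)]
    congr 1
    refine Finset.sum_congr rfl fun i _ => ?_
    rw [integral_finset_sum _ fun k _ => (hWWYYint i k i k).const_mul _]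
    refine Finset.sum_congr rfl fun k _ => ?_
    rw [integral_const_mul, hWWYYeq i k i k]
  have hcov : ∀ i k, ∫ ω, W i ω * W k ω ∂μ = cov μ (W i) (W k) := by
    intro i k
    simp [cov, hW0 i, hW0 k]
  have hYYle : ∀ i k, |∫ ω, Y i ω * Y k ω ∂μ| ≤ MY := by
    intro i k
    refine (aux_abs_integral_mul_le (hY i) (hY k)).trans ?_
    have := hMYle i; have := hMYle k; linarith
  -- bound on E[X_s²]
  have hEXle : ∀ s : S,
      ∫ ω, ((1 / Real.sqrt n) * ∑ i, w i s * W i ω * Y i ω) ^ 2 ∂μ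
        ≤ Cw ^ 2 * MY * σ2 := by
    intro s
    rw [hXsq_eq s]
    have hterm : ∀ i k : Fin n, (w i s * w k s)
        * ((∫ ω, W i ω * W k ω ∂μ) * ∫ ω, Y i ω * Y k ω ∂μ)
        ≤ Cw ^ 2 * MY * |cov μ (W i) (W k)| := by
      intro i k
      calc (w i s * w k s) * ((∫ ω, W i ω * W k ω ∂μ) * ∫ ω, Y i ω * Y k ω ∂μ)
          ≤ |(w i s * w k s) * ((∫ ω, W i ω * W k ω ∂μ) * ∫ ω, Y i ω * Y k ω ∂μ)| :=
            le_abs_self _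
        _ = |w i s| * |w k s| * (|cov μ (W i) (W k)| * |∫ ω, Y i ω * Y k ω ∂μ|) := by
            rw [abs_mul, abs_mul, abs_mul, hcov i k]
        _ ≤ Cw * Cw * (|cov μ (W i) (W k)| * MY) := by
            have ha : |w i s| * |w k s| ≤ Cw * Cw :=
              mul_le_mul (hwb i s) (hwb k s) (abs_nonneg _) hCw0
            have hb : |cov μ (W i) (W k)| * |∫ ω, Y i ω * Y k ω ∂μ|
                ≤ |cov μ (W i) (W k)| * MY :=
              mul_le_mul_of_nonneg_left (hYYle i k) (abs_nonneg _)
            exact mul_le_mul ha hb (by positivity) (mul_nonneg hCw0 hCw0)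
        _ = Cw ^ 2 * MY * |cov μ (W i) (W k)| := by ring
    calc (1 / (n : ℝ)) * ∑ i, ∑ k, (w i s * w k s)
            * ((∫ ω, W i ω * W k ω ∂μ) * ∫ ω, Y i ω * Y k ω ∂μ)
        ≤ (1 / (n : ℝ)) * ∑ i, ∑ k, Cw ^ 2 * MY * |cov μ (W i) (W k)| := by
          refine mul_le_mul_of_nonneg_left ?_ (by positivity)
          exact Finset.sum_le_sum fun i _ => Finset.sum_le_sum fun k _ => hterm i k
      _ = Cw ^ 2 * MY * σ2 := by
          rw [hσ2def]
          simp_rw [← Finset.mul_sum]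
          ring
  -- the two dominating functions
  set g1 : Ω → ℝ := fun ω =>
    Real.sqrt (∑ j : Fin Nε, ((1 / Real.sqrt n) * ∑ i, w i (pts j) * W i ω * Y i ω) ^ 2)
    with hg1def
  set g2 : Ω → ℝ := fun ω => Real.sqrt (∑ i, (W i ω * Y i ω) ^ 2) with hg2def
  have hg1sm : AEStronglyMeasurable g1 μ := by
    refine Real.continuous_sqrt.comp_aestronglyMeasurable ?_
    exact Finset.aestronglyMeasurable_fun_sum _ fun j _ =>
      ((hXmem (pts j)).aestronglyMeasurable.pow 2)
  have hg2sm : AEStronglyMeasurable g2 μ := by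
    refine Real.continuous_sqrt.comp_aestronglyMeasurable ?_
    exact Finset.aestronglyMeasurable_fun_sum _ fun i _ =>
      ((hWY2 i).aestronglyMeasurable.pow 2)
  have hg1mem : MemLp g1 2 μ := by
    refine (memLp_two_iff_integrable_sq hg1sm).2 ?_
    refine (integrable_finset_sum (μ := μ) Finset.univ fun j (_ : j ∈ Finset.univ) =>
      (hXmem (pts j)).integrable_sq).congr (ae_of_all _ fun ω => ?_)
    simp only [hg1def, Pi.pow_apply]
    rw [Real.sq_sqrt (Finset.sum_nonneg fun j _ => sq_nonneg _)]
  have hg2mem : MemLp g2 2 μ := by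
    refine (memLp_two_iff_integrable_sq hg2sm).2 ?_
    refine (integrable_finset_sum (μ := μ) Finset.univ fun i (_ : i ∈ Finset.univ) =>
      (hWY2 i).integrable_sq).congr (ae_of_all _ fun ω => ?_)
    simp only [hg2def, Pi.pow_apply]
    rw [Real.sq_sqrt (Finset.sum_nonneg fun i _ => sq_nonneg _)]
  -- bound on ∫ g1
  have hg1int : ∫ ω, g1 ω ∂μ ≤ Cw * (Real.sqrt MY * (Real.sqrt σ2 * Real.sqrt Nε)) := by
    have h0 : 0 ≤ ∫ ω, g1 ω ∂μ := integral_nonneg fun ω => Real.sqrt_nonneg _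
    have h1 : ∫ ω, g1 ω ∂μ ≤ Real.sqrt (∫ ω, g1 ω ^ 2 ∂μ) := aux_int_le_sqrt hg1mem h0
    have h2 : ∫ ω, g1 ω ^ 2 ∂μ
        = ∑ j : Fin Nε, ∫ ω, ((1 / Real.sqrt n) * ∑ i, w i (pts j) * W i ω * Y i ω) ^ 2 ∂μ := by
      rw [← integral_finset_sum _ fun j _ => (hXmem (pts j)).integrable_sq]
      refine integral_congr_ae (ae_of_all _ fun ω => ?_)
      simp only [hg1def]
      rw [Real.sq_sqrt (Finset.sum_nonneg fun j _ => sq_nonneg _)]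
    have h3 : ∫ ω, g1 ω ^ 2 ∂μ ≤ (Nε : ℝ) * (Cw ^ 2 * MY * σ2) := by
      rw [h2]
      calc ∑ j : Fin Nε, ∫ ω, ((1 / Real.sqrt n) * ∑ i, w i (pts j) * W i ω * Y i ω) ^ 2 ∂μ
          ≤ ∑ _j : Fin Nε, Cw ^ 2 * MY * σ2 :=
            Finset.sum_le_sum fun j _ => hEXle (pts j)
        _ = (Nε : ℝ) * (Cw ^ 2 * MY * σ2) := by
            rw [Finset.sum_const, Finset.card_univ, Fintype.card_fin, nsmul_eq_mul]
    have h4 : Real.sqrt ((Nε : ℝ) * (Cw ^ 2 * MY * σ2))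
        = Cw * (Real.sqrt MY * (Real.sqrt σ2 * Real.sqrt Nε)) := by
      rw [show (Nε : ℝ) * (Cw ^ 2 * MY * σ2) = Cw ^ 2 * (MY * (σ2 * (Nε : ℝ))) by ring,
        Real.sqrt_mul (sq_nonneg Cw), Real.sqrt_sq hCw0, Real.sqrt_mul hMY0,
        Real.sqrt_mul hσ20]
    exact h1.trans (by rw [← h4]; exact Real.sqrt_le_sqrt h3)
  -- bound on ∫ g2
  have hWY2eq : ∀ i, ∫ ω, (W i ω * Y i ω) ^ 2 ∂μ
      = (∫ ω, (W i ω) ^ 2 ∂μ) * ∫ ω, (Y i ω) ^ 2 ∂μ := by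
    intro i
    have h1 : ∫ ω, (W i ω * Y i ω) ^ 2 ∂μ = ∫ ω, (W i ω * W i ω) * (Y i ω * Y i ω) ∂μ :=
      integral_congr_ae (ae_of_all _ fun ω => by ring)
    rw [h1, hWWYYeq i i i i]
    congr 1
    · exact integral_congr_ae (ae_of_all _ fun ω => by ring)
    · exact integral_congr_ae (ae_of_all _ fun ω => by ring)
  have hg2int : ∫ ω, g2 ω ∂μ ≤ Real.sqrt MW * (Real.sqrt MY * Real.sqrt n) := by
    have h0 : 0 ≤ ∫ ω, g2 ω ∂μ := integral_nonneg fun ω => Real.sqrt_nonneg _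
    have h1 : ∫ ω, g2 ω ∂μ ≤ Real.sqrt (∫ ω, g2 ω ^ 2 ∂μ) := aux_int_le_sqrt hg2mem h0
    have h2 : ∫ ω, g2 ω ^ 2 ∂μ = ∑ i, ∫ ω, (W i ω * Y i ω) ^ 2 ∂μ := by
      rw [← integral_finset_sum _ fun i _ => (hWY2 i).integrable_sq]
      refine integral_congr_ae (ae_of_all _ fun ω => ?_)
      simp only [hg2def]
      rw [Real.sq_sqrt (Finset.sum_nonneg fun i _ => sq_nonneg _)]
    have h3 : ∫ ω, g2 ω ^ 2 ∂μ ≤ (n : ℝ) * (MW * MY) := by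
      rw [h2]
      calc ∑ i, ∫ ω, (W i ω * Y i ω) ^ 2 ∂μ
          ≤ ∑ _i : Fin n, MW * MY := by
            refine Finset.sum_le_sum fun i _ => ?_
            rw [hWY2eq i]
            exact mul_le_mul (hMWle i) (hMYle i) (hY2nn i) hMW0
        _ = (n : ℝ) * (MW * MY) := by
            rw [Finset.sum_const, Finset.card_univ, Fintype.card_fin, nsmul_eq_mul]
    have h4 : Real.sqrt ((n : ℝ) * (MW * MY))
        = Real.sqrt MW * (Real.sqrt MY * Real.sqrt n) := by
      rw [show (n : ℝ) * (MW * MY) = MW * (MY * (n : ℝ)) by ring,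
        Real.sqrt_mul hMW0, Real.sqrt_mul hMY0]
    exact h1.trans (by rw [← h4]; exact Real.sqrt_le_sqrt h3)
  -- split on whether S is empty
  by_cases hSne : Nonempty S
  · -- pointwise bound
    have hptw : ∀ (ω : Ω) (s : S),
        |(1 / Real.sqrt n) * ∑ i, w i s * W i ω * Y i ω| ≤ g1 ω + ε * g2 ω := by
      intro ω s
      obtain ⟨j, hj⟩ := hnet s
      have h1 : |(1 / Real.sqrt n) * ∑ i, w i (pts j) * W i ω * Y i ω| ≤ g1 ω := by
        rw [← Real.sqrt_sq_eq_abs]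
        exact Real.sqrt_le_sqrt (Finset.single_le_sum
          (f := fun j' : Fin Nε =>
            ((1 / Real.sqrt n) * ∑ i, w i (pts j') * W i ω * Y i ω) ^ 2)
          (fun j' _ => sq_nonneg _) (Finset.mem_univ j))
      have h2 : |(1 / Real.sqrt n) * ∑ i, w i s * W i ω * Y i ω
          - (1 / Real.sqrt n) * ∑ i, w i (pts j) * W i ω * Y i ω| ≤ ε * g2 ω := by
        have hrw : (1 / Real.sqrt n) * ∑ i, w i s * W i ω * Y i ω
            - (1 / Real.sqrt n) * ∑ i, w i (pts j) * W i ω * Y i ω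
            = (1 / Real.sqrt n) * ∑ i, (w i s - w i (pts j)) * (W i ω * Y i ω) := by
          rw [← mul_sub, ← Finset.sum_sub_distrib]
          congr 1
          exact Finset.sum_congr rfl fun i _ => by ring
        rw [hrw, abs_mul, abs_of_nonneg (show (0:ℝ) ≤ 1 / Real.sqrt n by positivity)]
        calc (1 / Real.sqrt n) * |∑ i, (w i s - w i (pts j)) * (W i ω * Y i ω)|
            ≤ (1 / Real.sqrt n) * (Real.sqrt (∑ i, (w i s - w i (pts j)) ^ 2)
                * Real.sqrt (∑ i, (W i ω * Y i ω) ^ 2)) :=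
              mul_le_mul_of_nonneg_left (aux_cs _ _) (by positivity)
          _ = ((1 / Real.sqrt n) * Real.sqrt (∑ i, (w i s - w i (pts j)) ^ 2))
                * Real.sqrt (∑ i, (W i ω * Y i ω) ^ 2) := by ring
          _ ≤ ε * g2 ω := by
              refine mul_le_mul_of_nonneg_right ?_ (Real.sqrt_nonneg _)
              have heq : (1 / Real.sqrt n) * Real.sqrt (∑ i, (w i s - w i (pts j)) ^ 2)
                  = Real.sqrt ((1 / (n : ℝ)) * ∑ i, (w i s - w i (pts j)) ^ 2) := by
                rw [Real.sqrt_mul (by positivity), one_div, one_div, Real.sqrt_inv]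
              rw [heq]
              exact hj
      calc |(1 / Real.sqrt n) * ∑ i, w i s * W i ω * Y i ω|
          = |((1 / Real.sqrt n) * ∑ i, w i (pts j) * W i ω * Y i ω)
              + ((1 / Real.sqrt n) * ∑ i, w i s * W i ω * Y i ω
                - (1 / Real.sqrt n) * ∑ i, w i (pts j) * W i ω * Y i ω)| := by
            congr 1; ring
        _ ≤ |(1 / Real.sqrt n) * ∑ i, w i (pts j) * W i ω * Y i ω|
              + |(1 / Real.sqrt n) * ∑ i, w i s * W i ω * Y i ω
                - (1 / Real.sqrt n) * ∑ i, w i (pts j) * W i ω * Y i ω| := abs_add_le _ _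
        _ ≤ g1 ω + ε * g2 ω := add_le_add h1 h2
    have hbdd : ∀ ω : Ω, BddAbove (Set.range fun s : S =>
        |(1 / Real.sqrt n) * ∑ i, w i s * W i ω * Y i ω|) := by
      intro ω
      exact ⟨g1 ω + ε * g2 ω, by rintro x ⟨s, rfl⟩; exact hptw ω s⟩
    have hnn : ∀ ω : Ω, 0 ≤ ⨆ s : S, |(1 / Real.sqrt n) * ∑ i, w i s * W i ω * Y i ω| :=
      fun ω => le_ciSup_of_le (hbdd ω) (Classical.arbitrary S) (abs_nonneg _)
    have hle : ∀ ω : Ω, (⨆ s : S, |(1 / Real.sqrt n) * ∑ i, w i s * W i ω * Y i ω|)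
        ≤ g1 ω + ε * g2 ω := fun ω => ciSup_le (hptw ω)
    have hg1I : Integrable g1 μ := hg1mem.integrable one_le_two
    have hg2I : Integrable g2 μ := hg2mem.integrable one_le_two
    calc ∫ ω, (⨆ s : S, |(1 / Real.sqrt n) * ∑ i, w i s * W i ω * Y i ω|) ∂μ
        ≤ ∫ ω, (g1 ω + ε * g2 ω) ∂μ :=
          integral_mono_of_nonneg (ae_of_all _ hnn) (hg1I.add (hg2I.const_mul ε))
            (ae_of_all _ hle)
      _ = (∫ ω, g1 ω ∂μ) + ε * ∫ ω, g2 ω ∂μ := by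
          rw [integral_add hg1I (hg2I.const_mul ε), integral_const_mul]
      _ ≤ Cw * (Real.sqrt MY * (Real.sqrt σ2 * Real.sqrt Nε))
            + ε * (Real.sqrt MW * (Real.sqrt MY * Real.sqrt n)) :=
          add_le_add hg1int (mul_le_mul_of_nonneg_left hg2int hε.le)
      _ ≤ (Cw ^ 2 + Real.sqrt MW) * Real.sqrt MY
            * (Real.sqrt σ2 * Real.sqrt Nε + ε * Real.sqrt n) := by
          have hP : (0:ℝ) ≤ Real.sqrt MY := Real.sqrt_nonneg _
          have hQ : (0:ℝ) ≤ Real.sqrt σ2 * Real.sqrt Nε :=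
            mul_nonneg (Real.sqrt_nonneg _) (Real.sqrt_nonneg _)
          have hR : (0:ℝ) ≤ Real.sqrt n := Real.sqrt_nonneg _
          have hT : (0:ℝ) ≤ Real.sqrt MW := Real.sqrt_nonneg _
          have hCw2 : Cw ≤ Cw ^ 2 := by nlinarith
          nlinarith [mul_nonneg (mul_nonneg (sub_nonneg.2 hCw2) hP) hQ,
            mul_nonneg (mul_nonneg (mul_nonneg (sq_nonneg Cw) hε.le) hP) hR,
            mul_nonneg (mul_nonneg hT hP) hQ]
  · -- S is empty
    haveI : IsEmpty S := not_nonempty_iff.mp hSne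
    simp only [Real.iSup_of_isEmpty, integral_zero]
    refine mul_nonneg (mul_nonneg ?_ (Real.sqrt_nonneg _)) ?_
    · positivity
    · exact add_nonneg (mul_nonneg (Real.sqrt_nonneg _) (Real.sqrt_nonneg _))
        (mul_nonneg hε.le (Real.sqrt_nonneg _))
end

section
/- Let X and Y be random variables on a common probability space, each distributed standard normal N(0,1), such that X − Y is a centered Gaussian random variable (for instance, if (X,Y) is jointly Gaussian). Let T : ℝ → ℝ be measurable with E[T(X)] = E[T(Y)] = 0 and Var[T(X)] = Var[T(Y)] = 1, and suppose there is a measurable K : ℝ² → ℝ such that |T(x) − T(y)| ≤ K(x,y)·|x−y| for almost every (x,y) with respect to the law of (X,Y), and E[K(X,Y)⁴] ≤ L < ∞. Then |1 − Cov[T(X), T(Y)]| ≤ √(3L) · |1 − Cov[X, Y]|. -/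
open MeasureTheory ProbabilityTheory

section Aux
open Real Set
open scoped NNReal ENNReal

lemma int_even_moment (n : ℕ) {b : ℝ} (hb : 0 < b) :
    ∫ x : ℝ, x ^ (2*n) * Real.exp (-b * x ^ 2)
      = 2 * (b ^ (-(2*(n:ℝ) + 1) / 2) * (1/2) * Real.Gamma ((2*(n:ℝ)+1)/2)) := by
  have h1 : ∫ x : ℝ, x ^ (2*n) * Real.exp (-b * x ^ 2)
      = 2 * ∫ x in Ioi (0:ℝ), x ^ (2*n) * Real.exp (-b * x ^ 2) := by
    rw [← integral_comp_abs (f := fun x => x ^ (2*n) * Real.exp (-b * x ^ 2))]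
    congr 1
    ext x
    rw [pow_mul, pow_mul, sq_abs]
  have h2 : ∫ x in Ioi (0:ℝ), x ^ (2*n) * Real.exp (-b * x ^ 2)
      = ∫ x in Ioi (0:ℝ), x ^ ((2*n : ℕ) : ℝ) * Real.exp (-b * x ^ (2:ℝ)) := by
    refine setIntegral_congr_fun measurableSet_Ioi (fun x hx => ?_)
    rw [Real.rpow_natCast, Real.rpow_two]
  have hq : (-1 : ℝ) < ((2*n : ℕ) : ℝ) := lt_of_lt_of_le (by norm_num) (Nat.cast_nonneg _)
  rw [h1, h2, integral_rpow_mul_exp_neg_mul_rpow two_pos hq hb]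
  push_cast
  ring_nf

lemma int_moment2 {b : ℝ} (hb : 0 < b) :
    ∫ x : ℝ, x ^ 2 * Real.exp (-b * x ^ 2) = b ^ (-(3:ℝ) / 2) * Real.sqrt π / 2 := by
  have := int_even_moment 1 hb
  norm_num [neg_mul] at this ⊢
  rw [this]
  have : Real.Gamma (3/2) = (1/2) * Real.sqrt π := by
    rw [show (3:ℝ)/2 = 1/2 + 1 by norm_num, Real.Gamma_add_one (by norm_num),
      Real.Gamma_one_half_eq]
  rw [this]
  ring

lemma int_moment4 {b : ℝ} (hb : 0 < b) :
    ∫ x : ℝ, x ^ 4 * Real.exp (-b * x ^ 2) = b ^ (-(5:ℝ) / 2) * (3/4) * Real.sqrt π := by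
  have := int_even_moment 2 hb
  norm_num [neg_mul] at this ⊢
  rw [this]
  have : Real.Gamma (5/2) = (3/4) * Real.sqrt π := by
    rw [show (5:ℝ)/2 = 3/2 + 1 by norm_num, Real.Gamma_add_one (by norm_num),
      show (3:ℝ)/2 = 1/2 + 1 by norm_num, Real.Gamma_add_one (by norm_num),
      Real.Gamma_one_half_eq]
    ring
  rw [this]
  ring

open ProbabilityTheory
open scoped NNReal ENNReal

lemma gaussianReal_integral_eq {v : ℝ≥0} (hv : v ≠ 0) (g : ℝ → ℝ) :
    ∫ x, g x ∂(gaussianReal 0 v) = ∫ x, gaussianPDFReal 0 v x * g x := by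
  rw [gaussianReal_of_var_ne_zero 0 hv]
  have : (gaussianPDF 0 v) = fun x => ((gaussianPDFReal 0 v x).toNNReal : ℝ≥0∞) := rfl
  rw [this, integral_withDensity_eq_integral_smul
    (measurable_gaussianPDFReal 0 v).real_toNNReal g]
  refine integral_congr_ae (Filter.Eventually.of_forall fun x => ?_)
  simp [NNReal.smul_def, Real.coe_toNNReal _ (gaussianPDFReal_nonneg 0 v x)]

lemma gaussianReal_integrable_iff {v : ℝ≥0} (hv : v ≠ 0) (g : ℝ → ℝ) :
    Integrable g (gaussianReal 0 v) ↔ Integrable (fun x => gaussianPDFReal 0 v x * g x) := by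
  rw [gaussianReal_of_var_ne_zero 0 hv]
  have : (gaussianPDF 0 v) = fun x => ((gaussianPDFReal 0 v x).toNNReal : ℝ≥0∞) := rfl
  rw [this, integrable_withDensity_iff_integrable_smul
    (measurable_gaussianPDFReal 0 v).real_toNNReal]
  constructor <;> intro h <;> refine h.congr (Filter.Eventually.of_forall fun x => ?_) <;>
    simp [NNReal.smul_def, Real.coe_toNNReal _ (gaussianPDFReal_nonneg 0 v x)]

lemma integrable_pow_gauss (n : ℕ) {b : ℝ} (hb : 0 < b) :
    Integrable (fun x : ℝ => x ^ n * Real.exp (-b * x ^ 2)) := by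
  have h := integrable_rpow_mul_exp_neg_mul_sq hb (s := (n:ℝ))
    (lt_of_lt_of_le (by norm_num) (Nat.cast_nonneg _))
  refine h.congr (Filter.Eventually.of_forall fun x => ?_)
  simp [Real.rpow_natCast]

lemma pdf_mul_eq (v : ℝ≥0) (g : ℝ → ℝ) :
    (fun x => gaussianPDFReal 0 v x * g x)
      = fun x => (Real.sqrt (2*Real.pi*(v:ℝ)))⁻¹
          * (g x * Real.exp (-((2*(v:ℝ))⁻¹) * x^2)) := by
  funext x
  have harg : -(x-0)^2/(2*(v:ℝ)) = -((2*(v:ℝ))⁻¹)*x^2 := by ring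
  rw [gaussianPDFReal, harg]
  ring

lemma aux_rpow32 {c : ℝ} (hc : 0 < c) : (c⁻¹) ^ (-(3:ℝ)/2) = c * Real.sqrt c := by
  rw [show (-(3:ℝ)/2) = -(3/2) by ring, Real.inv_rpow hc.le, ← Real.rpow_neg hc.le, neg_neg,
    show (3:ℝ)/2 = 1 + 1/2 by norm_num, Real.rpow_add hc, Real.rpow_one,
    ← Real.sqrt_eq_rpow]

lemma aux_rpow52 {c : ℝ} (hc : 0 < c) : (c⁻¹) ^ (-(5:ℝ)/2) = c^2 * Real.sqrt c := by
  rw [show (-(5:ℝ)/2) = -(5/2) by ring, Real.inv_rpow hc.le, ← Real.rpow_neg hc.le, neg_neg,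
    show (5:ℝ)/2 = 2 + 1/2 by norm_num, Real.rpow_add hc, ← Real.sqrt_eq_rpow,
    Real.rpow_two]

lemma coe_pos_of_ne {v : ℝ≥0} (hv : v ≠ 0) : 0 < (v:ℝ) := by
  exact_mod_cast pos_iff_ne_zero.mpr hv

lemma gauss_integrable_pow (v : ℝ≥0) (n : ℕ) :
    Integrable (fun x : ℝ => x ^ n) (gaussianReal 0 v) := by
  by_cases hv : v = 0
  · subst hv
    rw [gaussianReal_zero_var]
    exact (integrable_const ((0:ℝ)^n)).congr (ae_eq_dirac fun x : ℝ => x ^ n).symm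
  · rw [gaussianReal_integrable_iff hv, pdf_mul_eq]
    have hb : 0 < ((2*(v:ℝ))⁻¹) := by
      have := coe_pos_of_ne hv; positivity
    exact (integrable_pow_gauss n hb).const_mul _

lemma gauss_m1 (v : ℝ≥0) : ∫ x, x ∂(gaussianReal 0 v) = 0 := by
  by_cases hv : v = 0
  · subst hv; rw [gaussianReal_zero_var, integral_dirac]
  · rw [gaussianReal_integral_eq hv]
    set f : ℝ → ℝ := fun x => gaussianPDFReal 0 v x * x with hf
    have hodd : ∀ x, f (-x) = - f x := by
      intro x
      have h2 : ((-x:ℝ)-0)^2 = (x-0)^2 := by ring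
      simp only [hf, gaussianPDFReal, h2]
      ring
    have hmap : ∫ x, f x = ∫ x, f (-x) := by
      conv_lhs => rw [← Measure.map_neg_eq_self (volume : Measure ℝ)]
      exact (Homeomorph.neg ℝ).measurableEmbedding.integral_map _
    have : ∫ x, f x = - ∫ x, f x := by
      nth_rewrite 1 [hmap]
      simp only [hodd]
      exact integral_neg f
    linarith

lemma gauss_m2 (v : ℝ≥0) : ∫ x, x ^ 2 ∂(gaussianReal 0 v) = v := by
  by_cases hv : v = 0
  · subst hv; rw [gaussianReal_zero_var, integral_dirac]; norm_num
  · have hvr := coe_pos_of_ne hv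
    have h2v : (0:ℝ) < 2 * (v:ℝ) := by positivity
    have hb : 0 < ((2*(v:ℝ))⁻¹) := by positivity
    rw [gaussianReal_integral_eq hv, pdf_mul_eq]
    rw [integral_const_mul, int_moment2 hb, aux_rpow32 h2v,
      show 2*Real.pi*(v:ℝ) = (2*(v:ℝ))*Real.pi by ring,
      Real.sqrt_mul h2v.le]
    have h1 : Real.sqrt (2*(v:ℝ)) ≠ 0 := by positivity
    have h2 : Real.sqrt Real.pi ≠ 0 := by positivity
    field_simp

lemma gauss_m4 (v : ℝ≥0) : ∫ x, x ^ 4 ∂(gaussianReal 0 v) = 3 * (v:ℝ)^2 := by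
  by_cases hv : v = 0
  · subst hv; rw [gaussianReal_zero_var, integral_dirac]; norm_num
  · have hvr := coe_pos_of_ne hv
    have h2v : (0:ℝ) < 2 * (v:ℝ) := by positivity
    have hb : 0 < ((2*(v:ℝ))⁻¹) := by positivity
    rw [gaussianReal_integral_eq hv, pdf_mul_eq]
    rw [integral_const_mul, int_moment4 hb, aux_rpow52 h2v,
      show 2*Real.pi*(v:ℝ) = (2*(v:ℝ))*Real.pi by ring,
      Real.sqrt_mul h2v.le]
    have h1 : Real.sqrt (2*(v:ℝ)) ≠ 0 := by positivity
    have h2 : Real.sqrt Real.pi ≠ 0 := by positivity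
    have hs : Real.sqrt (2*(v:ℝ)) * Real.sqrt (2*(v:ℝ)) = 2*(v:ℝ) :=
      Real.mul_self_sqrt h2v.le
    field_simp
    nlinarith [hs]

lemma abs_mul_le_half_sq (a b : ℝ) : |a * b| ≤ (a^2 + b^2)/2 := by
  rw [abs_mul]
  nlinarith [sq_nonneg (|a| - |b|), sq_abs a, sq_abs b, abs_nonneg a, abs_nonneg b]

lemma integrable_mul_of_l2 {Ω : Type*} [MeasurableSpace Ω] {μ : Measure Ω} {f g : Ω → ℝ}
    (hf : MeasureTheory.MemLp f 2 μ) (hg : MeasureTheory.MemLp g 2 μ) :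
    Integrable (fun ω => f ω * g ω) μ := by
  refine Integrable.mono' (((hf.integrable_sq).add (hg.integrable_sq)).div_const 2)
    (hf.1.mul hg.1) (Filter.Eventually.of_forall fun ω => ?_)
  rw [Real.norm_eq_abs]
  exact abs_mul_le_half_sq _ _

lemma map_moment {Ω : Type*} [MeasurableSpace Ω] {μ : Measure Ω} {Z : Ω → ℝ}
    (hZ : Measurable Z) {ν : Measure ℝ} (hlaw : Measure.map Z μ = ν) (n : ℕ) :
    ∫ ω, (Z ω)^n ∂μ = ∫ x, x^n ∂ν := by
  rw [← hlaw]
  exact (integral_map hZ.aemeasurable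
    ((measurable_id.pow_const n).aestronglyMeasurable)).symm

lemma map_moment_integrable {Ω : Type*} [MeasurableSpace Ω] {μ : Measure Ω} {Z : Ω → ℝ}
    (hZ : Measurable Z) {v : ℝ≥0} (hlaw : Measure.map Z μ = gaussianReal 0 v) (n : ℕ) :
    Integrable (fun ω => (Z ω)^n) μ := by
  have := (integrable_map_measure ((measurable_id.pow_const n).aestronglyMeasurable)
    hZ.aemeasurable).mp (by rw [hlaw]; exact gauss_integrable_pow v n)
  exact this

end Aux

/-- If `X, Y ~ N(0,1)` with `X − Y` centered Gaussian, `T` measurable with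
`E[T(X)] = E[T(Y)] = 0`, `Var[T(X)] = Var[T(Y)] = 1`, and
`|T(x) − T(y)| ≤ K(x,y)|x−y|` a.e. with `E[K(X,Y)⁴] ≤ L`, then
`|1 − Cov[T(X),T(Y)]| ≤ √(3L) |1 − Cov[X,Y]|`. -/
theorem transformed_gaussian_covariance_bound
    {Ω : Type*} [MeasurableSpace Ω] (μ : Measure Ω) [IsProbabilityMeasure μ]
    (X Y : Ω → ℝ) (hXm : Measurable X) (hYm : Measurable Y)
    (hXlaw : Measure.map X μ = gaussianReal 0 1)
    (hYlaw : Measure.map Y μ = gaussianReal 0 1)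
    (hdiff : ∃ v : NNReal, Measure.map (fun ω => X ω - Y ω) μ = gaussianReal 0 v)
    (T : ℝ → ℝ) (hTm : Measurable T)
    (hTX2 : MemLp (fun ω => T (X ω)) 2 μ) (hTY2 : MemLp (fun ω => T (Y ω)) 2 μ)
    (hTX0 : ∫ ω, T (X ω) ∂μ = 0) (hTY0 : ∫ ω, T (Y ω) ∂μ = 0)
    (hTXvar : ∫ ω, (T (X ω)) ^ 2 ∂μ = 1) (hTYvar : ∫ ω, (T (Y ω)) ^ 2 ∂μ = 1)
    (K : ℝ → ℝ → ℝ) (hKm : Measurable fun p : ℝ × ℝ => K p.1 p.2)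
    (hLip : ∀ᵐ p ∂(Measure.map (fun ω => (X ω, Y ω)) μ),
      |T p.1 - T p.2| ≤ K p.1 p.2 * |p.1 - p.2|)
    (L : ℝ) (hKint : Integrable (fun ω => (K (X ω) (Y ω)) ^ 4) μ)
    (hL : ∫ ω, (K (X ω) (Y ω)) ^ 4 ∂μ ≤ L) :
    |1 - cov μ (fun ω => T (X ω)) (fun ω => T (Y ω))|
      ≤ Real.sqrt (3 * L) * |1 - cov μ X Y| := by
  obtain ⟨v, hv⟩ := hdiff
  set D : Ω → ℝ := fun ω => X ω - Y ω with hD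
  have hDm : Measurable D := hXm.sub hYm
  set Kf : Ω → ℝ := fun ω => K (X ω) (Y ω) with hKf
  have hKfm : Measurable Kf := hKm.comp (hXm.prodMk hYm)
  -- first and second moments of X and Y
  have hXint : ∫ ω, X ω ∂μ = 0 := by
    have h := map_moment hXm hXlaw 1
    simp only [pow_one] at h
    rw [h]; exact gauss_m1 1
  have hYint : ∫ ω, Y ω ∂μ = 0 := by
    have h := map_moment hYm hYlaw 1
    simp only [pow_one] at h
    rw [h]; exact gauss_m1 1
  have hX2 : ∫ ω, (X ω) ^ 2 ∂μ = 1 := by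
    rw [map_moment hXm hXlaw 2, gauss_m2 1]; norm_num
  have hY2 : ∫ ω, (Y ω) ^ 2 ∂μ = 1 := by
    rw [map_moment hYm hYlaw 2, gauss_m2 1]; norm_num
  have hXmem : MemLp X 2 μ := by
    rw [memLp_two_iff_integrable_sq hXm.aestronglyMeasurable]
    exact map_moment_integrable hXm hXlaw 2
  have hYmem : MemLp Y 2 μ := by
    rw [memLp_two_iff_integrable_sq hYm.aestronglyMeasurable]
    exact map_moment_integrable hYm hYlaw 2
  -- moments of D
  have hD2 : ∫ ω, (D ω) ^ 2 ∂μ = (v : ℝ) := by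
    rw [map_moment hDm hv 2]; exact gauss_m2 v
  have hD4 : ∫ ω, (D ω) ^ 4 ∂μ = 3 * (v:ℝ)^2 := by
    rw [map_moment hDm hv 4]; exact gauss_m4 v
  have hD4int : Integrable (fun ω => (D ω) ^ 4) μ := map_moment_integrable hDm hv 4
  have hD2mem : MemLp (fun ω => (D ω)^2) 2 μ := by
    rw [memLp_two_iff_integrable_sq ((hDm.pow_const 2).aestronglyMeasurable)]
    exact hD4int.congr (Filter.Eventually.of_forall fun ω => by ring)
  have hK2mem : MemLp (fun ω => (Kf ω)^2) 2 μ := by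
    rw [memLp_two_iff_integrable_sq ((hKfm.pow_const 2).aestronglyMeasurable)]
    exact hKint.congr (Filter.Eventually.of_forall fun ω => by ring)
  -- integrable products
  have hXY : Integrable (fun ω => X ω * Y ω) μ := integrable_mul_of_l2 hXmem hYmem
  have hAB : Integrable (fun ω => T (X ω) * T (Y ω)) μ := integrable_mul_of_l2 hTX2 hTY2
  -- E[D^2] = 2 - 2 E[XY]
  have hED2 : ∫ ω, (D ω)^2 ∂μ = 2 - 2 * ∫ ω, X ω * Y ω ∂μ := by
    have hsum : Integrable (fun ω => (X ω)^2 + (Y ω)^2) μ :=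
      hXmem.integrable_sq.add hYmem.integrable_sq
    have hprod : Integrable (fun ω => 2 * (X ω * Y ω)) μ := hXY.const_mul 2
    calc ∫ ω, (D ω)^2 ∂μ
        = ∫ ω, ((X ω)^2 + (Y ω)^2) - 2 * (X ω * Y ω) ∂μ :=
          integral_congr_ae (Filter.Eventually.of_forall fun ω => by simp only [hD]; ring)
      _ = (∫ ω, ((X ω)^2 + (Y ω)^2) ∂μ) - ∫ ω, 2 * (X ω * Y ω) ∂μ := integral_sub hsum hprod
      _ = 2 - 2 * ∫ ω, X ω * Y ω ∂μ := by
          rw [integral_add hXmem.integrable_sq hYmem.integrable_sq, integral_const_mul,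
            hX2, hY2]
          ring
  have hcovXY : 1 - cov μ X Y = (v:ℝ)/2 := by
    rw [cov, hXint, hYint]
    rw [hED2] at hD2
    linarith
  -- E[S^2] = 2 - 2 E[T(X)T(Y)]
  have hSmem : MemLp (fun ω => T (X ω) - T (Y ω)) 2 μ := hTX2.sub hTY2
  have hES2 : ∫ ω, (T (X ω) - T (Y ω))^2 ∂μ = 2 - 2 * ∫ ω, T (X ω) * T (Y ω) ∂μ := by
    have hsum : Integrable (fun ω => (T (X ω))^2 + (T (Y ω))^2) μ :=
      hTX2.integrable_sq.add hTY2.integrable_sq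
    have hprod : Integrable (fun ω => 2 * (T (X ω) * T (Y ω))) μ := hAB.const_mul 2
    calc ∫ ω, (T (X ω) - T (Y ω))^2 ∂μ
        = ∫ ω, ((T (X ω))^2 + (T (Y ω))^2) - 2 * (T (X ω) * T (Y ω)) ∂μ :=
          integral_congr_ae (Filter.Eventually.of_forall fun ω => by ring)
      _ = (∫ ω, ((T (X ω))^2 + (T (Y ω))^2) ∂μ) - ∫ ω, 2 * (T (X ω) * T (Y ω)) ∂μ :=
          integral_sub hsum hprod
      _ = 2 - 2 * ∫ ω, T (X ω) * T (Y ω) ∂μ := by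
          rw [integral_add hTX2.integrable_sq hTY2.integrable_sq, integral_const_mul,
            hTXvar, hTYvar]
          ring
  have hcovT : 1 - cov μ (fun ω => T (X ω)) (fun ω => T (Y ω))
      = (∫ ω, (T (X ω) - T (Y ω))^2 ∂μ) / 2 := by
    rw [cov, hTX0, hTY0, hES2]
    ring
  -- pointwise bound
  have hae : ∀ᵐ ω ∂μ, |T (X ω) - T (Y ω)| ≤ Kf ω * |D ω| := by
    have := ae_of_ae_map (hXm.prodMk hYm).aemeasurable hLip
    exact this
  have hsq : ∀ᵐ ω ∂μ, (T (X ω) - T (Y ω))^2 ≤ (Kf ω)^2 * (D ω)^2 := by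
    filter_upwards [hae] with ω hω
    have h0 : (0:ℝ) ≤ |T (X ω) - T (Y ω)| := abs_nonneg _
    nlinarith [sq_abs (T (X ω) - T (Y ω)), sq_abs (D ω), mul_self_le_mul_self h0 hω]
  have hKD2int : Integrable (fun ω => (Kf ω)^2 * (D ω)^2) μ :=
    integrable_mul_of_l2 hK2mem hD2mem
  have hstep1 : ∫ ω, (T (X ω) - T (Y ω))^2 ∂μ ≤ ∫ ω, (Kf ω)^2 * (D ω)^2 ∂μ :=
    integral_mono_ae hSmem.integrable_sq hKD2int hsq
  -- Cauchy-Schwarz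
  have hcs : ∫ ω, (Kf ω)^2 * (D ω)^2 ∂μ
      ≤ Real.sqrt (∫ ω, (Kf ω)^4 ∂μ) * Real.sqrt (∫ ω, (D ω)^4 ∂μ) := by
    have hconj : Real.HolderConjugate 2 2 := ⟨by norm_num, by norm_num, by norm_num⟩
    have h := integral_mul_le_Lp_mul_Lq_of_nonneg hconj
      (f := fun ω => (Kf ω)^2) (g := fun ω => (D ω)^2)
      (Filter.Eventually.of_forall fun ω => sq_nonneg _)
      (Filter.Eventually.of_forall fun ω => sq_nonneg _)
      (by simpa using hK2mem) (by simpa using hD2mem)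
    simp only [Real.rpow_two] at h
    have e1 : ∫ a, ((Kf a)^2) ^ 2 ∂μ = ∫ ω, (Kf ω)^4 ∂μ := by
      refine integral_congr_ae (Filter.Eventually.of_forall fun ω => ?_)
      ring
    have e2 : ∫ a, ((D a)^2) ^ 2 ∂μ = ∫ ω, (D ω)^4 ∂μ := by
      refine integral_congr_ae (Filter.Eventually.of_forall fun ω => ?_)
      ring
    rw [e1, e2] at h
    rw [Real.sqrt_eq_rpow, Real.sqrt_eq_rpow]
    exact h
  have hKf4nonneg : (0:ℝ) ≤ ∫ ω, (Kf ω)^4 ∂μ :=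
    integral_nonneg fun ω => by positivity
  have hLnn : (0:ℝ) ≤ L := le_trans hKf4nonneg hL
  have hfinal : ∫ ω, (T (X ω) - T (Y ω))^2 ∂μ ≤ Real.sqrt (3*L) * (v:ℝ) := by
    have h1 : Real.sqrt (∫ ω, (Kf ω)^4 ∂μ) ≤ Real.sqrt L := Real.sqrt_le_sqrt hL
    have h2 : Real.sqrt (∫ ω, (D ω)^4 ∂μ) = Real.sqrt 3 * (v:ℝ) := by
      rw [hD4, Real.sqrt_mul (by norm_num), Real.sqrt_sq v.coe_nonneg]
    calc ∫ ω, (T (X ω) - T (Y ω))^2 ∂μ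
        ≤ Real.sqrt (∫ ω, (Kf ω)^4 ∂μ) * Real.sqrt (∫ ω, (D ω)^4 ∂μ) :=
          le_trans hstep1 hcs
      _ ≤ Real.sqrt L * (Real.sqrt 3 * (v:ℝ)) := by
          rw [← h2]
          exact mul_le_mul_of_nonneg_right h1 (Real.sqrt_nonneg _)
      _ = Real.sqrt (3*L) * (v:ℝ) := by
          rw [Real.sqrt_mul (by norm_num) L]
          ring
  have hS2nonneg : (0:ℝ) ≤ ∫ ω, (T (X ω) - T (Y ω))^2 ∂μ :=
    integral_nonneg fun ω => sq_nonneg _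
  have hvnn := v.coe_nonneg
  rw [hcovXY, abs_of_nonneg (by linarith : (0:ℝ) ≤ (v:ℝ)/2), hcovT,
    abs_of_nonneg (by linarith [hS2nonneg])]
  have hs3L : (0:ℝ) ≤ Real.sqrt (3*L) := Real.sqrt_nonneg _
  nlinarith [hfinal]
end

section
/- Fix integers 1 ≤ k < k + h ≤ n. Let f : ℝⁿ → [0,∞) be an integrable probability density (with respect to Lebesgue measure) that factorizes, Lebesgue-almost everywhere, as f(x₁,…,xₙ) = p(x₁,…,x_k) · q(x_k, x_{k+h}) · r(x_{k+h},…,xₙ), where p, q, r are nonnegative measurable functions satisfying ∫ p(x₁,…,x_{k−1}, x_k) d(x₁,…,x_{k−1}) = 1 for a.e. x_k and ∫ r(x_{k+h}, x_{k+h+1},…,xₙ) d(x_{k+h+1},…,xₙ) = 1 for a.e. x_{k+h}. Let f_{1:k}(x₁,…,x_k) = ∫ f d(x_{k+1},…,xₙ), f_{k+h:n}(x_{k+h},…,xₙ) = ∫ f d(x₁,…,x_{k+h−1}), f_{k,k+h}(x_k, x_{k+h}) = ∫ f d(all other coordinates), and let f_k, f_{k+h} be the one-dimensional marginals of f in coordinates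 k and k+h. Then ∫_{ℝⁿ} | f − f_{1:k}·f_{k+h:n} | dx = ∫_{ℝ²} | f_{k,k+h} − f_k·f_{k+h} | d(x_k, x_{k+h}). -/
open MeasureTheory Function
open scoped ENNReal

namespace MarkovAux

variable {n : ℕ}

local notation "π" => Measure.pi fun _ : Fin n => (volume : Measure ℝ)
local notation "μ" => fun _ : Fin n => (volume : Measure ℝ)

lemma pullout (s : Finset (Fin n)) (g h : (Fin n → ℝ) → ENNReal) (hh : Measurable h)
    (hg : ∀ (x : Fin n → ℝ) (y : ∀ _ : s, ℝ), g (updateFinset x s y) = g x) (x : Fin n → ℝ) :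
    lmarginal μ s (fun z => g z * h z) x = g x * lmarginal μ s h x := by
  unfold lmarginal
  have hm : Measurable fun y : (i : s) → ℝ => h (updateFinset x s y) :=
    hh.comp measurable_updateFinset
  rw [← lintegral_const_mul (g x) hm]
  exact lintegral_congr fun y => by simp only [hg]

lemma lmarg_add (s : Finset (Fin n)) (g h : (Fin n → ℝ) → ENNReal) (hg : Measurable g)
    (x : Fin n → ℝ) :
    lmarginal μ s (fun z => g z + h z) x = lmarginal μ s g x + lmarginal μ s h x := by
  unfold lmarginal
  exact lintegral_add_left (hg.comp measurable_updateFinset) _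

lemma lmarg_cmul (s : Finset (Fin n)) (c : ENNReal) (h : (Fin n → ℝ) → ENNReal)
    (hh : Measurable h) (x : Fin n → ℝ) :
    lmarginal μ s (fun z => c * h z) x = c * lmarginal μ s h x := by
  unfold lmarginal
  have hm : Measurable fun y : (i : s) → ℝ => h (updateFinset x s y) :=
    hh.comp measurable_updateFinset
  exact lintegral_const_mul c hm

lemma lmarg_one (s : Finset (Fin n)) (x : Fin n → ℝ) :
    lmarginal μ s (fun _ => (1 : ENNReal)) x
      = (Measure.pi fun _ : s => (volume : Measure ℝ)) Set.univ := by
  unfold lmarginal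
  exact lintegral_one

lemma lmarg_univ_ne_zero (s : Finset (Fin n)) :
    (Measure.pi fun _ : s => (volume : Measure ℝ)) Set.univ ≠ 0 := by
  rw [← Set.pi_univ Set.univ, Measure.pi_pi]
  simp

lemma lmarg_zero (s : Finset (Fin n)) (D : (Fin n → ℝ) → ENNReal) (hD : Measurable D)
    (h0 : ∫⁻ x, D x ∂π = 0) : lmarginal μ s D =ᵐ[π] 0 := by
  classical
  set t : Finset (Fin n) := sᶜ with ht
  set h : (Fin n → ℝ) → ENNReal := lmarginal μ s D with hh
  have hhm : Measurable h := hD.lmarginal _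
  set z0 : Fin n → ℝ := fun _ => 0 with hz0
  have hdisj : Disjoint t s := disjoint_compl_left
  have huniv : t ∪ s = Finset.univ := by
    rw [ht]; ext i; simp [em (i ∈ s) |>.symm]
  have hdep : ∀ (x : Fin n → ℝ) (y : ∀ _ : s, ℝ), h (updateFinset x s y) = h x := by
    intro x y
    apply lmarginal_congr
    intro i hi
    simp [updateFinset, hi]
  have key : ∀ᵐ y ∂(Measure.pi fun _ : t => (volume : Measure ℝ)),
      h (updateFinset z0 t y) = 0 := by
    have h1 : lmarginal μ t h z0 = 0 := by
      have h2 := lmarginal_union μ D hD hdisj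
      rw [huniv] at h2
      have h3 : lmarginal μ Finset.univ D z0 = 0 := by
        rw [lintegral_eq_lmarginal_univ z0] at h0
        exact h0
      rw [h2] at h3
      exact h3
    unfold lmarginal at h1
    have hm : Measurable fun y : (i : t) → ℝ => h (updateFinset z0 t y) :=
      hhm.comp measurable_updateFinset
    rw [lintegral_eq_zero_iff hm] at h1
    exact h1
  set pre : Set (Fin n → ℝ) := {x | ¬ h x = 0} with hpre
  have hpreM : MeasurableSet pre := (hhm (measurableSet_singleton 0)).compl
  set ind : (Fin n → ℝ) → ENNReal := pre.indicator 1 with hind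
  have hindM : Measurable ind := (measurable_one).indicator hpreM
  have hind_dep : ∀ (x : Fin n → ℝ) (y : ∀ _ : s, ℝ), ind (updateFinset x s y) = ind x := by
    intro x y
    have : h (updateFinset x s y) = h x := hdep x y
    simp only [hind, Set.indicator_apply, hpre, Set.mem_setOf_eq, this, Pi.one_apply]
  have hπpre : π pre = 0 := by
    have e0 : π pre = lmarginal μ Finset.univ ind z0 := by
      rw [← lintegral_eq_lmarginal_univ z0, lintegral_indicator_one hpreM]
    rw [← huniv, lmarginal_union μ ind hindM hdisj] at e0
    set c := (Measure.pi fun _ : s => (volume : Measure ℝ)) Set.univ with hc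
    have e1 : lmarginal μ s ind = fun x => ind x * c := by
      funext x
      have := pullout s ind (fun _ => 1) measurable_one hind_dep x
      simp only [mul_one] at this
      rw [this, lmarg_one]
    rw [e1] at e0
    have e2 : lmarginal μ t (fun x => ind x * c) z0
        = (∫⁻ y, ind (updateFinset z0 t y)
            ∂(Measure.pi fun _ : t => (volume : Measure ℝ))) * c := by
      unfold lmarginal
      have hm : Measurable fun y : (i : t) → ℝ => ind (updateFinset z0 t y) :=
        hindM.comp measurable_updateFinset
      rw [lintegral_mul_const c hm]
    have e3 : (∫⁻ y, ind (updateFinset z0 t y)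
        ∂(Measure.pi fun _ : t => (volume : Measure ℝ))) = 0 := by
      have hm : Measurable fun y : (i : t) → ℝ => ind (updateFinset z0 t y) :=
        hindM.comp measurable_updateFinset
      rw [lintegral_eq_zero_iff hm]
      filter_upwards [key] with y hy
      simp [hind, Set.indicator_apply, hpre, hy]
    rw [e0, e2, e3, zero_mul]
  have goal : ∀ᵐ x ∂π, h x = 0 := by
    rw [ae_iff]
    exact hπpre
  filter_upwards [goal] with x hx
  exact hx

lemma lmarg_congr_ae (s : Finset (Fin n)) {g₁ g₂ : (Fin n → ℝ) → ENNReal}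
    (h1 : Measurable g₁) (h2 : Measurable g₂) (h : g₁ =ᵐ[π] g₂) :
    lmarginal μ s g₁ =ᵐ[π] lmarginal μ s g₂ := by
  set D : (Fin n → ℝ) → ENNReal := fun x => (g₁ x - g₂ x) + (g₂ x - g₁ x) with hD
  have hDm : Measurable D := ((h1.sub h2).add (h2.sub h1))
  have hD0 : ∫⁻ x, D x ∂π = 0 := by
    have : D =ᵐ[π] 0 := by
      filter_upwards [h] with x hx
      simp [hD, hx]
    rw [lintegral_congr_ae this]
    simp
  have hm := lmarg_zero s D hDm hD0
  filter_upwards [hm] with x hx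
  have le1 : lmarginal μ s (fun z => g₁ z - g₂ z) x ≤ lmarginal μ s D x := by
    refine lmarginal_mono (fun z => ?_) x
    simp only [hD]
    exact le_self_add
  have le2 : lmarginal μ s (fun z => g₂ z - g₁ z) x ≤ lmarginal μ s D x := by
    refine lmarginal_mono (fun z => ?_) x
    simp only [hD]
    exact le_add_self
  have hx0 : lmarginal μ s D x = 0 := hx
  have s1 : lmarginal μ s g₁ x - lmarginal μ s g₂ x = 0 := by
    have := @lintegral_sub_le _ _ (Measure.pi fun _ : s => (volume : Measure ℝ))
      (fun y => g₂ (updateFinset x s y)) (fun y => g₁ (updateFinset x s y))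
      (h2.comp measurable_updateFinset)
    refine le_antisymm (le_trans (le_trans this ?_) (le_trans le1 hx0.le)) zero_le
    exact le_of_eq rfl
  have s2 : lmarginal μ s g₂ x - lmarginal μ s g₁ x = 0 := by
    have := @lintegral_sub_le _ _ (Measure.pi fun _ : s => (volume : Measure ℝ))
      (fun y => g₁ (updateFinset x s y)) (fun y => g₂ (updateFinset x s y))
      (h1.comp measurable_updateFinset)
    refine le_antisymm (le_trans (le_trans this ?_) (le_trans le2 hx0.le)) zero_le
    exact le_of_eq rfl
  exact le_antisymm (tsub_eq_zero_iff_le.mp s1) (tsub_eq_zero_iff_le.mp s2)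

lemma transfer (a b : Fin n) (hab : a ≠ b) (φ ψ : (Fin n → ℝ) → ENNReal)
    (hφ : Measurable φ) (hψ : Measurable ψ)
    (hφdep : ∀ x y : Fin n → ℝ, x a = y a → x b = y b → φ x = φ y)
    (hψdep : ∀ x y : Fin n → ℝ, x a = y a → x b = y b → ψ x = ψ y)
    (hae : φ =ᵐ[π] ψ) :
    ∀ᵐ u : ℝ, ∀ᵐ v : ℝ,
      φ (Function.update (Function.update (fun _ => (0:ℝ)) a u) b v)
        = ψ (Function.update (Function.update (fun _ => (0:ℝ)) a u) b v) := by
  classical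
  set z0 : Fin n → ℝ := fun _ => 0 with hz0
  set D : (Fin n → ℝ) → ENNReal := fun x => (φ x - ψ x) + (ψ x - φ x) with hD
  have hDm : Measurable D := (hφ.sub hψ).add (hψ.sub hφ)
  have hDdep : ∀ x y : Fin n → ℝ, x a = y a → x b = y b → D x = D y := by
    intro x y h1 h2
    simp only [hD, hφdep x y h1 h2, hψdep x y h1 h2]
  have h0 : ∫⁻ x, D x ∂π = 0 := by
    have : D =ᵐ[π] 0 := by
      filter_upwards [hae] with x hx
      simp [hD, hx]
    rw [lintegral_congr_ae this]
    simp
  set s : Finset (Fin n) := ({a, b} : Finset (Fin n))ᶜ with hs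
  have has : a ∉ s := by simp [hs]
  have hbs : b ∉ s := by simp [hs]
  set c := (Measure.pi fun _ : s => (volume : Measure ℝ)) Set.univ with hc
  have hcne : c ≠ 0 := lmarg_univ_ne_zero s
  have hDdep' : ∀ (x : Fin n → ℝ) (y : ∀ _ : s, ℝ), D (updateFinset x s y) = D x := by
    intro x y
    refine hDdep _ _ ?_ ?_ <;> simp [updateFinset, has, hbs]
  set Dc : (Fin n → ℝ) → ENNReal := fun x => D x * c with hDc
  have hDcm : Measurable Dc := hDm.mul measurable_const
  have e1 : lmarginal μ s D = Dc := by
    funext x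
    have := pullout s D (fun _ => 1) measurable_one hDdep' x
    simp only [mul_one] at this
    rw [this, lmarg_one]
  have huniv : ({a, b} : Finset (Fin n)) ∪ s = Finset.univ := by
    rw [hs]; ext i; simp only [Finset.mem_union, Finset.mem_compl, Finset.mem_insert,
      Finset.mem_singleton, Finset.mem_univ, iff_true]; tauto
  have e : lmarginal μ ({a, b} : Finset (Fin n)) Dc z0 = 0 := by
    have h2 := lmarginal_union μ D hDm
      (disjoint_compl_right : Disjoint ({a, b} : Finset (Fin n)) ({a, b} : Finset (Fin n))ᶜ)
    rw [huniv] at h2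
    rw [← e1]
    have h3 : lmarginal μ Finset.univ D z0 = 0 := by
      rw [lintegral_eq_lmarginal_univ z0] at h0
      exact h0
    rw [h2] at h3
    exact h3
  have e2 := (lmarginal_insert Dc hDcm
    (show a ∉ ({b} : Finset (Fin n)) by simp [hab]) z0).symm.trans e
  have M1 : Measurable fun u : ℝ => (lmarginal μ {b} Dc) (Function.update z0 a u) :=
    (hDcm.lmarginal _).comp (measurable_update z0)
  rw [lintegral_eq_zero_iff M1] at e2
  filter_upwards [e2] with u hu
  have hu2 : (lmarginal μ {b} Dc) (Function.update z0 a u) = 0 := hu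
  simp only [lmarginal_singleton] at hu2
  have M2 : Measurable fun v : ℝ => Dc (Function.update (Function.update z0 a u) b v) :=
    hDcm.comp (measurable_update _)
  rw [lintegral_eq_zero_iff M2] at hu2
  filter_upwards [hu2] with v hv
  have hv' : D (Function.update (Function.update z0 a u) b v) * c = 0 := hv
  have hD0 : D (Function.update (Function.update z0 a u) b v) = 0 := by
    rcases mul_eq_zero.mp hv' with h | h
    · exact h
    · exact absurd h hcne
  rw [hD] at hD0
  simp only [] at hD0
  rcases add_eq_zero.mp hD0 with ⟨h1, h2⟩
  exact le_antisymm (tsub_eq_zero_iff_le.mp h1) (tsub_eq_zero_iff_le.mp h2)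

lemma tilde3 (x y z : ENNReal) (h : x * y * z ≠ ∞) :
    (if x = ∞ then 0 else x) * (if y = ∞ then 0 else y) * (if z = ∞ then 0 else z)
      = x * y * z := by
  by_cases hx : x = ∞
  · subst hx
    rcases eq_or_ne y 0 with hy | hy
    · simp [hy]
    rcases eq_or_ne z 0 with hz | hz
    · simp [hz]
    · exact absurd (by rw [ENNReal.top_mul hy, ENNReal.top_mul hz]) h
  by_cases hy : y = ∞
  · subst hy
    rcases eq_or_ne x 0 with hx0 | hx0
    · simp [hx0]
    rcases eq_or_ne z 0 with hz | hz
    · simp [hz]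
    · exact absurd (by rw [ENNReal.mul_top hx0, ENNReal.top_mul hz]) h
  by_cases hz : z = ∞
  · subst hz
    rcases eq_or_ne x 0 with hx0 | hx0
    · simp [hx0]
    rcases eq_or_ne y 0 with hy0 | hy0
    · simp [hy0]
    · exact absurd (ENNReal.mul_top (mul_ne_zero hx0 hy0)) h
  · simp [hx, hy, hz]

end MarkovAux


open MeasureTheory

/-- If an `n`-dimensional probability density `f` factorizes a.e. as
`f(x) = p(x_{1:k}) q(x_k, x_{k+h}) r(x_{k+h:n})` with the conditional densities `p`
(given `x_k`) and `r` (given `x_{k+h}`) integrating to one, then the `L¹` distance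
between `f` and the product of its past/future marginals equals the `L¹` distance
between the joint `(x_k, x_{k+h})`-marginal and the product of the two one-dimensional
marginals. Coordinates `a` and `b` play the roles of `k` and `k+h`. -/
theorem markov_factorization_l1_identity
    (n : ℕ) (a b : Fin n) (hab : a < b)
    (f p q r : (Fin n → ℝ) → ENNReal)
    (hf : Measurable f) (hp : Measurable p) (hq : Measurable q) (hr : Measurable r)
    (hprob : ∫⁻ x, f x ∂(Measure.pi fun _ : Fin n => (volume : Measure ℝ)) = 1)
    (hfac : ∀ᵐ x ∂(Measure.pi fun _ : Fin n => (volume : Measure ℝ)),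
      f x = p x * q x * r x)
    (hpdep : ∀ x y : Fin n → ℝ, (∀ i, i ≤ a → x i = y i) → p x = p y)
    (hqdep : ∀ x y : Fin n → ℝ, x a = y a → x b = y b → q x = q y)
    (hrdep : ∀ x y : Fin n → ℝ, (∀ i, b ≤ i → x i = y i) → r x = r y)
    (hpnorm : ∀ᵐ x ∂(Measure.pi fun _ : Fin n => (volume : Measure ℝ)),
      MeasureTheory.lmarginal (fun _ : Fin n => (volume : Measure ℝ))
        (Finset.univ.filter fun i => i < a) p x = 1)
    (hrnorm : ∀ᵐ x ∂(Measure.pi fun _ : Fin n => (volume : Measure ℝ)),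
      MeasureTheory.lmarginal (fun _ : Fin n => (volume : Measure ℝ))
        (Finset.univ.filter fun i => b < i) r x = 1) :
    -- `F1k` integrates out the coordinates after `a`; `Fkhn` those before `b`;
    -- `Fab`, `Fa`, `Fb` are the joint and single marginals in coordinates `a`, `b`.
    (fun (F1k Fkhn Fab Fa Fb : (Fin n → ℝ) → ENNReal) =>
      (∫⁻ x, ((f x - F1k x * Fkhn x) + (F1k x * Fkhn x - f x))
          ∂(Measure.pi fun _ : Fin n => (volume : Measure ℝ)))
        = ∫⁻ u : ℝ, ∫⁻ v : ℝ,
            ((Fab (Function.update (Function.update (fun _ => (0 : ℝ)) a u) b v)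
                - Fa (Function.update (fun _ => (0 : ℝ)) a u)
                  * Fb (Function.update (fun _ => (0 : ℝ)) b v))
              + (Fa (Function.update (fun _ => (0 : ℝ)) a u)
                  * Fb (Function.update (fun _ => (0 : ℝ)) b v)
                - Fab (Function.update (Function.update (fun _ => (0 : ℝ)) a u) b v))))
      (MeasureTheory.lmarginal (fun _ : Fin n => (volume : Measure ℝ))
        (Finset.univ.filter fun i => a < i) f)
      (MeasureTheory.lmarginal (fun _ : Fin n => (volume : Measure ℝ))
        (Finset.univ.filter fun i => i < b) f)
      (MeasureTheory.lmarginal (fun _ : Fin n => (volume : Measure ℝ))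
        (Finset.univ.filter fun i => i ≠ a ∧ i ≠ b) f)
      (MeasureTheory.lmarginal (fun _ : Fin n => (volume : Measure ℝ))
        (Finset.univ.filter fun i => i ≠ a) f)
      (MeasureTheory.lmarginal (fun _ : Fin n => (volume : Measure ℝ))
        (Finset.univ.filter fun i => i ≠ b) f) := by
  classical
  dsimp only
  have hab' : a ≠ b := ne_of_lt hab
  set z0 : Fin n → ℝ := fun _ => (0 : ℝ) with hz0
  -- the truncated versions of p, q, r
  set p1 : (Fin n → ℝ) → ENNReal := fun x => if p x = ⊤ then 0 else p x with hp1def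
  set q1 : (Fin n → ℝ) → ENNReal := fun x => if q x = ⊤ then 0 else q x with hq1def
  set r1 : (Fin n → ℝ) → ENNReal := fun x => if r x = ⊤ then 0 else r x with hr1def
  set f1 : (Fin n → ℝ) → ENNReal := fun x => p1 x * q1 x * r1 x with hf1def
  have hp1m : Measurable p1 :=
    Measurable.ite (hp (measurableSet_singleton ⊤)) measurable_const hp
  have hq1m : Measurable q1 :=
    Measurable.ite (hq (measurableSet_singleton ⊤)) measurable_const hq
  have hr1m : Measurable r1 :=
    Measurable.ite (hr (measurableSet_singleton ⊤)) measurable_const hr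
  have hf1m : Measurable f1 := (hp1m.mul hq1m).mul hr1m
  have hp1fin : ∀ x, p1 x ≠ ⊤ := by
    intro x; by_cases h : p x = ⊤ <;> simp [hp1def, h]
  have hq1fin : ∀ x, q1 x ≠ ⊤ := by
    intro x; by_cases h : q x = ⊤ <;> simp [hq1def, h]
  have hr1fin : ∀ x, r1 x ≠ ⊤ := by
    intro x; by_cases h : r x = ⊤ <;> simp [hr1def, h]
  have hp1dep : ∀ x y : Fin n → ℝ, (∀ i, i ≤ a → x i = y i) → p1 x = p1 y := by
    intro x y h; simp only [hp1def, hpdep x y h]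
  have hq1dep : ∀ x y : Fin n → ℝ, x a = y a → x b = y b → q1 x = q1 y := by
    intro x y h1 h2; simp only [hq1def, hqdep x y h1 h2]
  have hr1dep : ∀ x y : Fin n → ℝ, (∀ i, b ≤ i → x i = y i) → r1 x = r1 y := by
    intro x y h; simp only [hr1def, hrdep x y h]
  -- `f` agrees a.e. with `f1`
  have hff1 : f =ᵐ[Measure.pi fun _ : Fin n => (volume : Measure ℝ)] f1 := by
    have hfin : ∀ᵐ x ∂(Measure.pi fun _ : Fin n => (volume : Measure ℝ)), f x < ⊤ :=
      ae_lt_top hf (by rw [hprob]; exact ENNReal.one_ne_top)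
    filter_upwards [hfac, hfin] with x hx hxf
    rw [hx]
    rw [hx] at hxf
    exact (MarkovAux.tilde3 (p x) (q x) (r x) hxf.ne).symm
  by_cases hM : ∀ i : Fin n, a < i → b ≤ i
  · -- main case : no coordinate strictly between `a` and `b`
    set A := Finset.univ.filter (fun i : Fin n => i < a) with hA
    set B := Finset.univ.filter (fun i : Fin n => b < i) with hB
    have memA : ∀ i : Fin n, i ∈ A ↔ i < a := fun i => by simp [hA]
    have memB : ∀ i : Fin n, i ∈ B ↔ b < i := fun i => by simp [hB]
    have haA : a ∉ A := by rw [memA]; exact lt_irrefl a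
    have hbA : b ∉ A := by rw [memA]; exact not_lt.mpr hab.le
    have haB : a ∉ B := by rw [memB]; exact not_lt.mpr hab.le
    have hbB : b ∉ B := by rw [memB]; exact lt_irrefl b
    have hanotb : a ∉ ({b} : Finset (Fin n)) := by simp [hab']
    have hbnota : b ∉ ({a} : Finset (Fin n)) := by simp [hab'.symm]
    have dAB : Disjoint A B := by
      rw [Finset.disjoint_left]; intro i h1 h2
      rw [memA] at h1; rw [memB] at h2
      exact absurd (lt_trans (lt_trans h1 hab) h2) (lt_irrefl i)
    have dbB : Disjoint ({b} : Finset (Fin n)) B := Finset.disjoint_singleton_left.mpr hbB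
    have daA : Disjoint ({a} : Finset (Fin n)) A := Finset.disjoint_singleton_left.mpr haA
    have dbAB : Disjoint ({b} : Finset (Fin n)) (A ∪ B) := by
      rw [Finset.disjoint_singleton_left, Finset.mem_union]; push_neg; exact ⟨hbA, hbB⟩
    have daAB : Disjoint ({a} : Finset (Fin n)) (A ∪ B) := by
      rw [Finset.disjoint_singleton_left, Finset.mem_union]; push_neg; exact ⟨haA, haB⟩
    have dabAB : Disjoint ({a, b} : Finset (Fin n)) (A ∪ B) := by
      rw [Finset.disjoint_left]
      intro i hi hU
      rw [Finset.mem_insert, Finset.mem_singleton] at hi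
      rw [Finset.mem_union] at hU
      rcases hi with rfl | rfl
      · rcases hU with h | h
        · exact haA h
        · exact haB h
      · rcases hU with h | h
        · exact hbA h
        · exact hbB h
    have S1 : Finset.univ.filter (fun i : Fin n => a < i) = {b} ∪ B := by
      ext i
      have hMi := hM i
      simp only [Finset.mem_filter, Finset.mem_univ, true_and, Finset.mem_union,
        Finset.mem_singleton, memB]
      constructor
      · intro h
        rcases eq_or_lt_of_le (hMi h) with h' | h'
        · exact Or.inl h'.symm
        · exact Or.inr h'
      · rintro (rfl | h)
        · exact hab
        · exact lt_trans hab h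
    have S2 : Finset.univ.filter (fun i : Fin n => i < b) = {a} ∪ A := by
      ext i
      have hMi := hM i
      simp only [Finset.mem_filter, Finset.mem_univ, true_and, Finset.mem_union,
        Finset.mem_singleton, memA]
      constructor
      · intro h
        by_cases hia : i = a
        · exact Or.inl hia
        · refine Or.inr ?_
          by_contra hlt
          have h1 : a < i := lt_of_le_of_ne (not_lt.mp hlt) (Ne.symm hia)
          exact absurd (hMi h1) (not_le.mpr h)
      · rintro (rfl | h)
        · exact hab
        · exact lt_trans h hab
    have S3 : Finset.univ.filter (fun i : Fin n => i ≠ a ∧ i ≠ b) = A ∪ B := by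
      ext i
      have hMi := hM i
      simp only [Finset.mem_filter, Finset.mem_univ, true_and, Finset.mem_union, memA, memB,
        ne_eq]
      constructor
      · rintro ⟨h1, h2⟩
        rcases lt_or_ge i a with h | h
        · exact Or.inl h
        · refine Or.inr ?_
          have h3 : a < i := lt_of_le_of_ne h (fun e => h1 e.symm)
          exact lt_of_le_of_ne (hMi h3) (fun e => h2 e.symm)
      · rintro (h | h)
        · exact ⟨ne_of_lt h, ne_of_lt (lt_trans h hab)⟩
        · exact ⟨ne_of_gt (lt_trans hab h), ne_of_gt h⟩
    have S4 : Finset.univ.filter (fun i : Fin n => i ≠ a) = {b} ∪ (A ∪ B) := by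
      ext i
      have hMi := hM i
      simp only [Finset.mem_filter, Finset.mem_univ, true_and, Finset.mem_union,
        Finset.mem_singleton, memA, memB, ne_eq]
      constructor
      · intro h1
        by_cases hib : i = b
        · exact Or.inl hib
        · rcases lt_or_ge i a with h | h
          · exact Or.inr (Or.inl h)
          · have h3 : a < i := lt_of_le_of_ne h (fun e => h1 e.symm)
            exact Or.inr (Or.inr (lt_of_le_of_ne (hMi h3) (fun e => hib e.symm)))
      · rintro (rfl | h | h)
        · exact hab'.symm
        · exact ne_of_lt h
        · exact ne_of_gt (lt_trans hab h)
    have S5 : Finset.univ.filter (fun i : Fin n => i ≠ b) = {a} ∪ (A ∪ B) := by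
      ext i
      have hMi := hM i
      simp only [Finset.mem_filter, Finset.mem_univ, true_and, Finset.mem_union,
        Finset.mem_singleton, memA, memB, ne_eq]
      constructor
      · intro h1
        by_cases hia : i = a
        · exact Or.inl hia
        · rcases lt_or_ge i a with h | h
          · exact Or.inr (Or.inl h)
          · have h3 : a < i := lt_of_le_of_ne h (fun e => hia e.symm)
            exact Or.inr (Or.inr (lt_of_le_of_ne (hMi h3) (fun e => h1 e.symm)))
      · rintro (rfl | h | h)
        · exact hab'
        · exact ne_of_lt (lt_trans h hab)
        · exact ne_of_gt h
    have S6 : ({a, b} : Finset (Fin n)) ∪ (A ∪ B) = Finset.univ := by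
      ext i
      have hMi := hM i
      simp only [Finset.mem_union, Finset.mem_insert, Finset.mem_singleton, memA, memB,
        Finset.mem_univ, iff_true]
      by_cases hia : i = a
      · exact Or.inl (Or.inl hia)
      rcases lt_or_ge i a with h | h
      · exact Or.inr (Or.inl h)
      have h3 : a < i := lt_of_le_of_ne h (fun e => hia e.symm)
      rcases eq_or_lt_of_le (hMi h3) with h' | h'
      · exact Or.inl (Or.inr h'.symm)
      · exact Or.inr (Or.inr h')
    have hnotAB : ∀ i : Fin n, i ∉ A ∪ B → i = a ∨ i = b := by
      intro i hi
      by_contra hcon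
      push_neg at hcon
      have hmem : i ∈ Finset.univ.filter (fun i : Fin n => i ≠ a ∧ i ≠ b) := by
        simp only [Finset.mem_filter, Finset.mem_univ, true_and]
        exact hcon
      rw [S3] at hmem
      exact hi hmem
    have updF_out : ∀ (s : Finset (Fin n)) (x : Fin n → ℝ) (y : ∀ _ : s, ℝ) (i : Fin n),
        i ∉ s → Function.updateFinset x s y i = x i := by
      intro s x y i hi
      simp [Function.updateFinset, hi]
    have hp1B : ∀ (x : Fin n → ℝ) (y : ∀ _ : B, ℝ),
        p1 (Function.updateFinset x B y) = p1 x := by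
      intro x y
      refine hp1dep _ _ fun j hj => updF_out _ _ _ _ ?_
      rw [memB]; exact not_lt.mpr (le_trans hj hab.le)
    have hp1b : ∀ (x : Fin n → ℝ) (y : ∀ _ : ({b} : Finset (Fin n)), ℝ),
        p1 (Function.updateFinset x {b} y) = p1 x := by
      intro x y
      refine hp1dep _ _ fun j hj => updF_out _ _ _ _ ?_
      simp only [Finset.mem_singleton]
      exact fun e => absurd (e ▸ hj) (not_le.mpr hab)
    have hq1A : ∀ (x : Fin n → ℝ) (y : ∀ _ : A, ℝ),
        q1 (Function.updateFinset x A y) = q1 x :=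
      fun x y => hq1dep _ _ (updF_out _ _ _ _ haA) (updF_out _ _ _ _ hbA)
    have hq1B : ∀ (x : Fin n → ℝ) (y : ∀ _ : B, ℝ),
        q1 (Function.updateFinset x B y) = q1 x :=
      fun x y => hq1dep _ _ (updF_out _ _ _ _ haB) (updF_out _ _ _ _ hbB)
    have hr1A : ∀ (x : Fin n → ℝ) (y : ∀ _ : A, ℝ),
        r1 (Function.updateFinset x A y) = r1 x := by
      intro x y
      refine hr1dep _ _ fun j hj => updF_out _ _ _ _ ?_
      rw [memA]; exact not_lt.mpr (le_trans hab.le hj)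
    have hr1a : ∀ (x : Fin n → ℝ) (y : ∀ _ : ({a} : Finset (Fin n)), ℝ),
        r1 (Function.updateFinset x {a} y) = r1 x := by
      intro x y
      refine hr1dep _ _ fun j hj => updF_out _ _ _ _ ?_
      simp only [Finset.mem_singleton]
      exact fun e => absurd (e ▸ hj) (not_le.mpr hab)
    set P : (Fin n → ℝ) → ENNReal := lmarginal (fun _ : Fin n => (volume : Measure ℝ)) A p1 with hPdef
    set R : (Fin n → ℝ) → ENNReal := lmarginal (fun _ : Fin n => (volume : Measure ℝ)) B r1 with hRdef
    set Qa : (Fin n → ℝ) → ENNReal := lmarginal (fun _ : Fin n => (volume : Measure ℝ)) ({b} : Finset (Fin n)) q1 with hQadef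
    set Qb : (Fin n → ℝ) → ENNReal := lmarginal (fun _ : Fin n => (volume : Measure ℝ)) ({a} : Finset (Fin n)) q1 with hQbdef
    have hPm : Measurable P := hp1m.lmarginal _
    have hRm : Measurable R := hr1m.lmarginal _
    have hQam : Measurable Qa := hq1m.lmarginal _
    have hQbm : Measurable Qb := hq1m.lmarginal _
    have hPdep : ∀ x y : Fin n → ℝ, x a = y a → P x = P y := by
      intro x y h
      rw [hPdef]
      refine lintegral_congr fun z => hp1dep _ _ fun j hj => ?_
      by_cases hjA : j ∈ A
      · simp [Function.updateFinset, hjA]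
      · rw [updF_out _ _ _ _ hjA, updF_out _ _ _ _ hjA]
        have hje : j = a := le_antisymm hj (not_lt.mp (by rwa [memA] at hjA))
        rw [hje]; exact h
    have hRdep : ∀ x y : Fin n → ℝ, x b = y b → R x = R y := by
      intro x y h
      rw [hRdef]
      refine lintegral_congr fun z => hr1dep _ _ fun j hj => ?_
      by_cases hjB : j ∈ B
      · simp [Function.updateFinset, hjB]
      · rw [updF_out _ _ _ _ hjB, updF_out _ _ _ _ hjB]
        have hje : j = b := le_antisymm (not_lt.mp (by rwa [memB] at hjB)) hj
        rw [hje]; exact h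
    have hQadep : ∀ x y : Fin n → ℝ, x a = y a → Qa x = Qa y := by
      intro x y h
      rw [hQadef]
      refine lintegral_congr fun z => hq1dep _ _ ?_ ?_
      · rw [updF_out _ _ _ _ hanotb, updF_out _ _ _ _ hanotb]; exact h
      · simp [Function.updateFinset]
    have hQbdep : ∀ x y : Fin n → ℝ, x b = y b → Qb x = Qb y := by
      intro x y h
      rw [hQbdef]
      refine lintegral_congr fun z => hq1dep _ _ ?_ ?_
      · simp [Function.updateFinset]
      · rw [updF_out _ _ _ _ hbnota, updF_out _ _ _ _ hbnota]; exact h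
    have hP1 : P =ᵐ[(Measure.pi fun _ : Fin n => (volume : Measure ℝ))] 1 := by
      set indp : (Fin n → ℝ) → ENNReal := fun z => if p z = ⊤ then 1 else 0 with hindp
      have hindpm : Measurable indp :=
        Measurable.ite (hp (measurableSet_singleton ⊤)) measurable_const measurable_const
      have e1 : p = fun z => p1 z + ⊤ * indp z := by
        funext z
        by_cases h : p z = ⊤ <;> simp [hp1def, hindp, h]
      have hsplit : ∀ x, lmarginal (fun _ : Fin n => (volume : Measure ℝ)) A p x
          = P x + ⊤ * lmarginal (fun _ : Fin n => (volume : Measure ℝ)) A indp x := by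
        intro x
        calc lmarginal (fun _ : Fin n => (volume : Measure ℝ)) A p x
            = lmarginal (fun _ : Fin n => (volume : Measure ℝ)) A (fun z => p1 z + ⊤ * indp z) x := by rw [← e1]
          _ = P x + lmarginal (fun _ : Fin n => (volume : Measure ℝ)) A (fun z => ⊤ * indp z) x :=
              MarkovAux.lmarg_add A p1 _ hp1m x
          _ = P x + ⊤ * lmarginal (fun _ : Fin n => (volume : Measure ℝ)) A indp x := by
              rw [MarkovAux.lmarg_cmul A ⊤ indp hindpm x]
      filter_upwards [hpnorm] with x hx
      rw [hsplit x] at hx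
      rcases eq_or_ne (lmarginal (fun _ : Fin n => (volume : Measure ℝ)) A indp x) 0 with h0 | h0
      · rw [h0, mul_zero, add_zero] at hx
        simpa using hx
      · rw [ENNReal.top_mul h0, add_top] at hx
        exact absurd hx ENNReal.top_ne_one
    have hR1 : R =ᵐ[(Measure.pi fun _ : Fin n => (volume : Measure ℝ))] 1 := by
      set indr : (Fin n → ℝ) → ENNReal := fun z => if r z = ⊤ then 1 else 0 with hindr
      have hindrm : Measurable indr :=
        Measurable.ite (hr (measurableSet_singleton ⊤)) measurable_const measurable_const
      have e1 : r = fun z => r1 z + ⊤ * indr z := by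
        funext z
        by_cases h : r z = ⊤ <;> simp [hr1def, hindr, h]
      have hsplit : ∀ x, lmarginal (fun _ : Fin n => (volume : Measure ℝ)) B r x
          = R x + ⊤ * lmarginal (fun _ : Fin n => (volume : Measure ℝ)) B indr x := by
        intro x
        calc lmarginal (fun _ : Fin n => (volume : Measure ℝ)) B r x
            = lmarginal (fun _ : Fin n => (volume : Measure ℝ)) B (fun z => r1 z + ⊤ * indr z) x := by rw [← e1]
          _ = R x + lmarginal (fun _ : Fin n => (volume : Measure ℝ)) B (fun z => ⊤ * indr z) x :=
              MarkovAux.lmarg_add B r1 _ hr1m x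
          _ = R x + ⊤ * lmarginal (fun _ : Fin n => (volume : Measure ℝ)) B indr x := by
              rw [MarkovAux.lmarg_cmul B ⊤ indr hindrm x]
      filter_upwards [hrnorm] with x hx
      rw [hsplit x] at hx
      rcases eq_or_ne (lmarginal (fun _ : Fin n => (volume : Measure ℝ)) B indr x) 0 with h0 | h0
      · rw [h0, mul_zero, add_zero] at hx
        simpa using hx
      · rw [ENNReal.top_mul h0, add_top] at hx
        exact absurd hx ENNReal.top_ne_one
    -- basic marginal computations for f1
    have c1 : lmarginal (fun _ : Fin n => (volume : Measure ℝ)) B f1 = fun x => p1 x * q1 x * R x := by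
      funext x
      have hg : ∀ (z : Fin n → ℝ) (y : ∀ _ : B, ℝ),
          (fun w => p1 w * q1 w) (Function.updateFinset z B y) = (fun w => p1 w * q1 w) z := by
        intro z y; simp only []; rw [hp1B, hq1B]
      exact MarkovAux.pullout B (fun w => p1 w * q1 w) r1 hr1m hg x
    have cAB : lmarginal (fun _ : Fin n => (volume : Measure ℝ)) (A ∪ B) f1 = fun x => q1 x * R x * P x := by
      rw [lmarginal_union _ f1 hf1m dAB, c1]
      funext x
      have h1 : (fun z => p1 z * q1 z * R z) = fun z => (q1 z * R z) * p1 z := by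
        funext z; ring
      rw [h1]
      have hg : ∀ (z : Fin n → ℝ) (y : ∀ _ : A, ℝ),
          (fun w => q1 w * R w) (Function.updateFinset z A y) = (fun w => q1 w * R w) z := by
        intro z y; simp only []
        rw [hq1A, hRdep _ _ (updF_out _ _ _ _ hbA)]
      exact MarkovAux.pullout A (fun w => q1 w * R w) p1 hp1m hg x
    have c2 : lmarginal (fun _ : Fin n => (volume : Measure ℝ)) A f1 = fun x => q1 x * r1 x * P x := by
      funext x
      have h1 : f1 = fun z => (q1 z * r1 z) * p1 z := by
        rw [hf1def]; funext z; ring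
      rw [h1]
      have hg : ∀ (z : Fin n → ℝ) (y : ∀ _ : A, ℝ),
          (fun w => q1 w * r1 w) (Function.updateFinset z A y) = (fun w => q1 w * r1 w) z := by
        intro z y; simp only []; rw [hq1A, hr1A]
      exact MarkovAux.pullout A (fun w => q1 w * r1 w) p1 hp1m hg x
    have hq1Rm : Measurable fun z => q1 z * R z := hq1m.mul hRm
    have hq1Pm : Measurable fun z => q1 z * P z := hq1m.mul hPm
    have hq1R : (fun z => q1 z * R z) =ᵐ[(Measure.pi fun _ : Fin n => (volume : Measure ℝ))] q1 := by
      filter_upwards [hR1] with x hx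
      simp only [Pi.one_apply] at hx
      simp only [hx, mul_one]
    have hq1P : (fun z => q1 z * P z) =ᵐ[(Measure.pi fun _ : Fin n => (volume : Measure ℝ))] q1 := by
      filter_upwards [hP1] with x hx
      simp only [Pi.one_apply] at hx
      simp only [hx, mul_one]
    have hQaR : lmarginal (fun _ : Fin n => (volume : Measure ℝ)) ({b} : Finset (Fin n)) (fun z => q1 z * R z) =ᵐ[(Measure.pi fun _ : Fin n => (volume : Measure ℝ))] Qa :=
      MarkovAux.lmarg_congr_ae {b} hq1Rm hq1m hq1R
    have hQbP : lmarginal (fun _ : Fin n => (volume : Measure ℝ)) ({a} : Finset (Fin n)) (fun z => q1 z * P z) =ᵐ[(Measure.pi fun _ : Fin n => (volume : Measure ℝ))] Qb :=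
      MarkovAux.lmarg_congr_ae {a} hq1Pm hq1m hq1P
    have E1 : lmarginal (fun _ : Fin n => (volume : Measure ℝ)) (Finset.univ.filter fun i => a < i) f
        =ᵐ[(Measure.pi fun _ : Fin n => (volume : Measure ℝ))] fun x => p1 x * Qa x := by
      rw [S1, lmarginal_union _ f hf dbB]
      refine (MarkovAux.lmarg_congr_ae ({b} : Finset (Fin n)) (hf.lmarginal _)
        (hf1m.lmarginal _) (MarkovAux.lmarg_congr_ae B hf hf1m hff1)).trans ?_
      rw [c1]
      have h1 : (fun x => p1 x * q1 x * R x) = fun z => p1 z * (q1 z * R z) := by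
        funext z; ring
      rw [h1]
      have h2 : ∀ x, lmarginal (fun _ : Fin n => (volume : Measure ℝ)) ({b} : Finset (Fin n)) (fun z => p1 z * (q1 z * R z)) x
          = p1 x * lmarginal (fun _ : Fin n => (volume : Measure ℝ)) ({b} : Finset (Fin n)) (fun z => q1 z * R z) x :=
        fun x => MarkovAux.pullout _ p1 (fun z => q1 z * R z) hq1Rm hp1b x
      filter_upwards [hQaR] with x hx
      simp only [h2 x, hx]
    have E2 : lmarginal (fun _ : Fin n => (volume : Measure ℝ)) (Finset.univ.filter fun i => i < b) f
        =ᵐ[(Measure.pi fun _ : Fin n => (volume : Measure ℝ))] fun x => r1 x * Qb x := by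
      rw [S2, lmarginal_union _ f hf daA]
      refine (MarkovAux.lmarg_congr_ae ({a} : Finset (Fin n)) (hf.lmarginal _)
        (hf1m.lmarginal _) (MarkovAux.lmarg_congr_ae A hf hf1m hff1)).trans ?_
      rw [c2]
      have h1 : (fun x => q1 x * r1 x * P x) = fun z => r1 z * (q1 z * P z) := by
        funext z; ring
      rw [h1]
      have h2 : ∀ x, lmarginal (fun _ : Fin n => (volume : Measure ℝ)) ({a} : Finset (Fin n)) (fun z => r1 z * (q1 z * P z)) x
          = r1 x * lmarginal (fun _ : Fin n => (volume : Measure ℝ)) ({a} : Finset (Fin n)) (fun z => q1 z * P z) x :=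
        fun x => MarkovAux.pullout _ r1 (fun z => q1 z * P z) hq1Pm hr1a x
      filter_upwards [hQbP] with x hx
      simp only [h2 x, hx]
    have E3q : lmarginal (fun _ : Fin n => (volume : Measure ℝ)) (Finset.univ.filter fun i => i ≠ a ∧ i ≠ b) f =ᵐ[(Measure.pi fun _ : Fin n => (volume : Measure ℝ))] q1 := by
      have E3 := MarkovAux.lmarg_congr_ae (A ∪ B) hf hf1m hff1
      rw [cAB] at E3
      rw [S3]
      refine E3.trans ?_
      filter_upwards [hP1, hR1] with x h2 h3
      simp only [Pi.one_apply] at h2 h3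
      simp only [h2, h3, mul_one]
    have E4 : lmarginal (fun _ : Fin n => (volume : Measure ℝ)) (Finset.univ.filter fun i => i ≠ a) f =ᵐ[(Measure.pi fun _ : Fin n => (volume : Measure ℝ))] Qa := by
      rw [S4, lmarginal_union _ f hf dbAB]
      refine (MarkovAux.lmarg_congr_ae ({b} : Finset (Fin n)) (hf.lmarginal _)
        (hf1m.lmarginal _) (MarkovAux.lmarg_congr_ae (A ∪ B) hf hf1m hff1)).trans ?_
      rw [cAB]
      have h1 : (fun x => q1 x * R x * P x) = fun z => P z * (q1 z * R z) := by
        funext z; ring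
      rw [h1]
      have hgP : ∀ (z : Fin n → ℝ) (y : ∀ _ : ({b} : Finset (Fin n)), ℝ),
          P (Function.updateFinset z {b} y) = P z :=
        fun z y => hPdep _ _ (updF_out _ z y a hanotb)
      have h2 : ∀ x, lmarginal (fun _ : Fin n => (volume : Measure ℝ)) ({b} : Finset (Fin n)) (fun z => P z * (q1 z * R z)) x
          = P x * lmarginal (fun _ : Fin n => (volume : Measure ℝ)) ({b} : Finset (Fin n)) (fun z => q1 z * R z) x :=
        fun x => MarkovAux.pullout _ P (fun z => q1 z * R z) hq1Rm hgP x
      filter_upwards [hQaR, hP1] with x hx hPx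
      simp only [Pi.one_apply] at hPx
      simp only [h2 x, hx, hPx, one_mul]
    have E5 : lmarginal (fun _ : Fin n => (volume : Measure ℝ)) (Finset.univ.filter fun i => i ≠ b) f =ᵐ[(Measure.pi fun _ : Fin n => (volume : Measure ℝ))] Qb := by
      rw [S5, lmarginal_union _ f hf daAB]
      refine (MarkovAux.lmarg_congr_ae ({a} : Finset (Fin n)) (hf.lmarginal _)
        (hf1m.lmarginal _) (MarkovAux.lmarg_congr_ae (A ∪ B) hf hf1m hff1)).trans ?_
      rw [cAB]
      have h1 : (fun x => q1 x * R x * P x) = fun z => R z * (q1 z * P z) := by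
        funext z; ring
      rw [h1]
      have hgR : ∀ (z : Fin n → ℝ) (y : ∀ _ : ({a} : Finset (Fin n)), ℝ),
          R (Function.updateFinset z {a} y) = R z :=
        fun z y => hRdep _ _ (updF_out _ z y b hbnota)
      have h2 : ∀ x, lmarginal (fun _ : Fin n => (volume : Measure ℝ)) ({a} : Finset (Fin n)) (fun z => R z * (q1 z * P z)) x
          = R x * lmarginal (fun _ : Fin n => (volume : Measure ℝ)) ({a} : Finset (Fin n)) (fun z => q1 z * P z) x :=
        fun x => MarkovAux.pullout _ R (fun z => q1 z * P z) hq1Pm hgR x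
      filter_upwards [hQbP, hR1] with x hx hRx
      simp only [Pi.one_apply] at hRx
      simp only [h2 x, hx, hRx, one_mul]
    -- the difference function
    set Dq : (Fin n → ℝ) → ENNReal :=
      fun x => (q1 x - Qa x * Qb x) + (Qa x * Qb x - q1 x) with hDqdef
    have hDqm : Measurable Dq :=
      ((hq1m.sub (hQam.mul hQbm)).add ((hQam.mul hQbm).sub hq1m))
    have hDqdep : ∀ x y : Fin n → ℝ, x a = y a → x b = y b → Dq x = Dq y := by
      intro x y h1 h2
      simp only [hDqdef, hq1dep x y h1 h2, hQadep x y h1, hQbdep x y h2]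
    set G : (Fin n → ℝ) → ENNReal := fun x =>
      ((f x - lmarginal (fun _ : Fin n => (volume : Measure ℝ)) (Finset.univ.filter fun i => a < i) f x
          * lmarginal (fun _ : Fin n => (volume : Measure ℝ)) (Finset.univ.filter fun i => i < b) f x)
        + (lmarginal (fun _ : Fin n => (volume : Measure ℝ)) (Finset.univ.filter fun i => a < i) f x
          * lmarginal (fun _ : Fin n => (volume : Measure ℝ)) (Finset.univ.filter fun i => i < b) f x - f x)) with hGdef
    have hGm : Measurable G :=
      (hf.sub ((hf.lmarginal _).mul (hf.lmarginal _))).add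
        (((hf.lmarginal _).mul (hf.lmarginal _)).sub hf)
    set G2 : (Fin n → ℝ) → ENNReal := fun x => (p1 x * r1 x) * Dq x with hG2def
    have hG2m : Measurable G2 := (hp1m.mul hr1m).mul hDqm
    have hGG2 : G =ᵐ[(Measure.pi fun _ : Fin n => (volume : Measure ℝ))] G2 := by
      filter_upwards [hff1, E1, E2] with x h1 h2 h3
      have hc : p1 x * r1 x ≠ ⊤ := ENNReal.mul_ne_top (hp1fin x) (hr1fin x)
      have e1 : f1 x = (p1 x * r1 x) * q1 x := by simp only [hf1def]; ring
      have e2 : (p1 x * Qa x) * (r1 x * Qb x) = (p1 x * r1 x) * (Qa x * Qb x) := by ring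
      simp only [hGdef, hG2def, h1, h2, h3]
      rw [e1, e2, ← ENNReal.mul_sub (fun _ _ => hc), ← ENNReal.mul_sub (fun _ _ => hc),
        ← mul_add]
    have hG2AB : lmarginal (fun _ : Fin n => (volume : Measure ℝ)) (A ∪ B) G2 = fun x => Dq x * R x * P x := by
      rw [lmarginal_union _ G2 hG2m dAB]
      have hBstep : lmarginal (fun _ : Fin n => (volume : Measure ℝ)) B G2 = fun x => (p1 x * Dq x) * R x := by
        funext x
        have h1 : G2 = fun z => (p1 z * Dq z) * r1 z := by
          rw [hG2def]; funext z; ring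
        rw [h1]
        have hg : ∀ (z : Fin n → ℝ) (y : ∀ _ : B, ℝ),
            (fun w => p1 w * Dq w) (Function.updateFinset z B y)
              = (fun w => p1 w * Dq w) z := by
          intro z y; simp only []
          rw [hp1B, hDqdep _ _ (updF_out _ _ _ _ haB) (updF_out _ _ _ _ hbB)]
        exact MarkovAux.pullout B (fun w => p1 w * Dq w) r1 hr1m hg x
      rw [hBstep]
      funext x
      have h1 : (fun x => (p1 x * Dq x) * R x) = fun z => (Dq z * R z) * p1 z := by
        funext z; ring
      rw [h1]
      have hg : ∀ (z : Fin n → ℝ) (y : ∀ _ : A, ℝ),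
          (fun w => Dq w * R w) (Function.updateFinset z A y)
            = (fun w => Dq w * R w) z := by
        intro z y; simp only []
        rw [hDqdep _ _ (updF_out _ _ _ _ haA) (updF_out _ _ _ _ hbA),
          hRdep _ _ (updF_out _ _ _ _ hbA)]
      exact MarkovAux.pullout A (fun w => Dq w * R w) p1 hp1m hg x
    have E8 : lmarginal (fun _ : Fin n => (volume : Measure ℝ)) (A ∪ B) G =ᵐ[(Measure.pi fun _ : Fin n => (volume : Measure ℝ))] Dq := by
      refine (MarkovAux.lmarg_congr_ae (A ∪ B) hGm hG2m hGG2).trans ?_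
      rw [hG2AB]
      filter_upwards [hP1, hR1] with x h1 h2
      simp only [Pi.one_apply] at h1 h2
      simp only [h1, h2, mul_one]
    set H : (Fin n → ℝ) → ENNReal := fun x =>
      ((lmarginal (fun _ : Fin n => (volume : Measure ℝ)) (Finset.univ.filter fun i => i ≠ a ∧ i ≠ b) f x
          - lmarginal (fun _ : Fin n => (volume : Measure ℝ)) (Finset.univ.filter fun i => i ≠ a) f x
            * lmarginal (fun _ : Fin n => (volume : Measure ℝ)) (Finset.univ.filter fun i => i ≠ b) f x)
        + (lmarginal (fun _ : Fin n => (volume : Measure ℝ)) (Finset.univ.filter fun i => i ≠ a) f x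
            * lmarginal (fun _ : Fin n => (volume : Measure ℝ)) (Finset.univ.filter fun i => i ≠ b) f x
          - lmarginal (fun _ : Fin n => (volume : Measure ℝ)) (Finset.univ.filter fun i => i ≠ a ∧ i ≠ b) f x)) with hHdef
    have hHm : Measurable H :=
      ((hf.lmarginal _).sub ((hf.lmarginal _).mul (hf.lmarginal _))).add
        (((hf.lmarginal _).mul (hf.lmarginal _)).sub (hf.lmarginal _))
    have hHDq : H =ᵐ[(Measure.pi fun _ : Fin n => (volume : Measure ℝ))] Dq := by
      filter_upwards [E3q, E4, E5] with x h1 h2 h3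
      simp only [hHdef, hDqdef, h1, h2, h3]
    have hφdep : ∀ x y : Fin n → ℝ, x a = y a → x b = y b →
        lmarginal (fun _ : Fin n => (volume : Measure ℝ)) (A ∪ B) G x = lmarginal (fun _ : Fin n => (volume : Measure ℝ)) (A ∪ B) G y := by
      intro x y h1 h2
      apply lmarginal_congr
      intro i hi
      rcases hnotAB i hi with rfl | rfl
      · exact h1
      · exact h2
    have hFabdep : ∀ x y : Fin n → ℝ, x a = y a → x b = y b →
        lmarginal (fun _ : Fin n => (volume : Measure ℝ)) (Finset.univ.filter fun i => i ≠ a ∧ i ≠ b) f x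
          = lmarginal (fun _ : Fin n => (volume : Measure ℝ)) (Finset.univ.filter fun i => i ≠ a ∧ i ≠ b) f y := by
      intro x y h1 h2
      apply lmarginal_congr
      intro i hi
      rw [S3] at hi
      rcases hnotAB i hi with rfl | rfl
      · exact h1
      · exact h2
    have hFadep : ∀ x y : Fin n → ℝ, x a = y a →
        lmarginal (fun _ : Fin n => (volume : Measure ℝ)) (Finset.univ.filter fun i => i ≠ a) f x
          = lmarginal (fun _ : Fin n => (volume : Measure ℝ)) (Finset.univ.filter fun i => i ≠ a) f y := by
      intro x y h1
      apply lmarginal_congr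
      intro i hi
      simp only [Finset.mem_filter, Finset.mem_univ, true_and, not_not, ne_eq] at hi
      rw [hi]; exact h1
    have hFbdep : ∀ x y : Fin n → ℝ, x b = y b →
        lmarginal (fun _ : Fin n => (volume : Measure ℝ)) (Finset.univ.filter fun i => i ≠ b) f x
          = lmarginal (fun _ : Fin n => (volume : Measure ℝ)) (Finset.univ.filter fun i => i ≠ b) f y := by
      intro x y h1
      apply lmarginal_congr
      intro i hi
      simp only [Finset.mem_filter, Finset.mem_univ, true_and, not_not, ne_eq] at hi
      rw [hi]; exact h1
    have hψdep : ∀ x y : Fin n → ℝ, x a = y a → x b = y b → H x = H y := by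
      intro x y h1 h2
      simp only [hHdef, hFabdep x y h1 h2, hFadep x y h1, hFbdep x y h2]
    have HT := MarkovAux.transfer a b hab' (lmarginal (fun _ : Fin n => (volume : Measure ℝ)) (A ∪ B) G) H
      (hGm.lmarginal _) hHm hφdep hψdep (E8.trans hHDq.symm)
    -- final assembly
    have final : (∫⁻ x, G x ∂(Measure.pi fun _ : Fin n => (volume : Measure ℝ)))
        = ∫⁻ u : ℝ, ∫⁻ v : ℝ,
            H (Function.update (Function.update z0 a u) b v) := by
      rw [lintegral_eq_lmarginal_univ z0, ← S6,
        lmarginal_union _ G hGm dabAB,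
        lmarginal_insert _ (hGm.lmarginal _) hanotb z0]
      simp only [lmarginal_singleton]
      refine lintegral_congr_ae ?_
      filter_upwards [HT] with u hu
      refine lintegral_congr_ae ?_
      filter_upwards [hu] with v hv
      exact hv
    have main2 : (∫⁻ x, G x ∂(Measure.pi fun _ : Fin n => (volume : Measure ℝ)))
        = ∫⁻ u : ℝ, ∫⁻ v : ℝ,
            ((lmarginal (fun _ : Fin n => (volume : Measure ℝ)) (Finset.univ.filter fun i => i ≠ a ∧ i ≠ b) f
                (Function.update (Function.update z0 a u) b v)
              - lmarginal (fun _ : Fin n => (volume : Measure ℝ)) (Finset.univ.filter fun i => i ≠ a) f (Function.update z0 a u)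
                * lmarginal (fun _ : Fin n => (volume : Measure ℝ)) (Finset.univ.filter fun i => i ≠ b) f (Function.update z0 b v))
            + (lmarginal (fun _ : Fin n => (volume : Measure ℝ)) (Finset.univ.filter fun i => i ≠ a) f (Function.update z0 a u)
                * lmarginal (fun _ : Fin n => (volume : Measure ℝ)) (Finset.univ.filter fun i => i ≠ b) f (Function.update z0 b v)
              - lmarginal (fun _ : Fin n => (volume : Measure ℝ)) (Finset.univ.filter fun i => i ≠ a ∧ i ≠ b) f
                (Function.update (Function.update z0 a u) b v))) := by
      rw [final]
      refine lintegral_congr fun u => lintegral_congr fun v => ?_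
      have ea := hFadep (Function.update z0 a u)
        (Function.update (Function.update z0 a u) b v)
        (by simp [Function.update_of_ne hab'])
      have eb := hFbdep (Function.update z0 b v)
        (Function.update (Function.update z0 a u) b v)
        (by simp)
      simp only [hHdef]
      rw [← ea, ← eb]
    exact main2
  · -- contradiction: there is a coordinate strictly between `a` and `b`
    exfalso
    push_neg at hM
    obtain ⟨i, hai, hib'⟩ := hM
    have hib : i < b := hib'
    have hf1i : ∀ x y : Fin n → ℝ, (∀ j, j ≠ i → x j = y j) → f1 x = f1 y := by
      intro x y hxy
      have hp' := hp1dep x y (fun j hj => hxy j (ne_of_lt (lt_of_le_of_lt hj hai)))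
      have hq' := hq1dep x y (hxy a (ne_of_lt hai)) (hxy b (ne_of_gt hib))
      have hr' := hr1dep x y (fun j hj => hxy j (ne_of_gt (lt_of_lt_of_le hib hj)))
      simp only [hf1def, hp', hq', hr']
    have h1 : ∫⁻ x, f1 x ∂(Measure.pi fun _ : Fin n => (volume : Measure ℝ)) = 1 := by
      rw [← lintegral_congr_ae hff1]; exact hprob
    rw [lintegral_eq_lmarginal_univ z0] at h1
    have hsplit : ({i} : Finset (Fin n)) ∪ ({i} : Finset (Fin n))ᶜ = Finset.univ := by
      ext j; simp [em (j ∈ ({i} : Finset (Fin n)))]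
    rw [← hsplit, lmarginal_union _ f1 hf1m
      (disjoint_compl_right : Disjoint ({i} : Finset (Fin n)) ({i} : Finset (Fin n))ᶜ)] at h1
    set h : (Fin n → ℝ) → ENNReal :=
      lmarginal (fun _ : Fin n => (volume : Measure ℝ)) ({i} : Finset (Fin n))ᶜ f1 with hhdef
    have hinv : ∀ (x : Fin n → ℝ) (t : ℝ), h (Function.update x i t) = h x := by
      intro x t
      rw [hhdef]
      refine lintegral_congr fun y => ?_
      refine hf1i _ _ fun j hj => ?_
      have hjc : j ∈ ({i} : Finset (Fin n))ᶜ := by simp [hj]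
      simp [Function.updateFinset, hjc]
    simp only [lmarginal_singleton] at h1
    have h2 : ∫⁻ t, h (Function.update z0 i t) ∂(volume : Measure ℝ)
        = ∫⁻ _, h z0 ∂(volume : Measure ℝ) :=
      lintegral_congr fun t => hinv z0 t
    rw [h2] at h1
    simp only [lintegral_const, Real.volume_univ] at h1
    rcases eq_or_ne (h z0) 0 with h0 | h0
    · rw [h0, zero_mul] at h1
      exact zero_ne_one h1
    · rw [ENNReal.mul_top h0] at h1
      exact ENNReal.top_ne_one h1
end

section
/- Let (V_1, …, V_n) and (X_1, …, X_n) be square-integrable real random variables on a common probability space such that the vector (V_1, …, V_n) is independent of (X_1, …, X_n), E[V_i] = 0 for all i, and each product V_i·(X_i − E[X_i]) is square-integrable. For real coefficients a_1, …, a_n and b_1, …, b_n define G = Σ_i a_i·(X_i − E[X_i]), H = Σ_j b_j·(X_j − E[X_j]), G* = Σ_i a_i·V_i·(X_i − E[X_i]), H* = Σ_j b_j·V_j·(X_j − E[X_j]). Then Cov[G*, H*] − Cov[G, H] = Σ_{i,j=1}^n a_i·b_j·( Cov[V_i, V_j] − 1 )·Cov[X_i, X_j]. -/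
open MeasureTheory ProbabilityTheory

private lemma l2_mul_integrable {Ω : Type*} [MeasurableSpace Ω] {μ : Measure Ω}
    {f g : Ω → ℝ} (hf : MemLp f 2 μ) (hg : MemLp g 2 μ) :
    Integrable (fun ω => f ω * g ω) μ := by
  have : MemLp (f • g) 1 μ := hg.smul hf (hpqr := ⟨by rw [inv_one]; exact ENNReal.inv_two_add_inv_two⟩)
  exact memLp_one_iff_integrable.mp this

private lemma integral_sum_mul_sum {Ω : Type*} [MeasurableSpace Ω] (μ : Measure Ω)
    {n : ℕ} (f g : Fin n → Ω → ℝ)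
    (h : ∀ i j, Integrable (fun ω => f i ω * g j ω) μ) :
    ∫ ω, (∑ i, f i ω) * (∑ j, g j ω) ∂μ = ∑ i, ∑ j, ∫ ω, f i ω * g j ω ∂μ := by
  have : ∀ ω, (∑ i, f i ω) * (∑ j, g j ω) = ∑ i, ∑ j, f i ω * g j ω := by
    intro ω; rw [Finset.sum_mul_sum]
  simp_rw [this]
  rw [integral_finset_sum _ (fun i _ => integrable_finset_sum _ (fun j _ => h i j))]
  exact Finset.sum_congr rfl fun i _ => integral_finset_sum _ fun j _ => h i j

/-- For square-integrable `V_i`, `X_i` with `(V_1,…,V_n)` independent of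
`(X_1,…,X_n)`, `E[V_i] = 0`, and each `V_i (X_i − E[X_i])` square-integrable, the
multiplier-bootstrap covariance discrepancy satisfies
`Cov[G*, H*] − Cov[G, H] = Σ_{i,j} a_i b_j (Cov[V_i,V_j] − 1) Cov[X_i,X_j]`,
where `G = Σ a_i (X_i − E[X_i])`, `H = Σ b_j (X_j − E[X_j])`,
`G* = Σ a_i V_i (X_i − E[X_i])`, `H* = Σ b_j V_j (X_j − E[X_j])`. -/
theorem multiplier_bootstrap_covariance_discrepancy
    {Ω : Type*} [MeasurableSpace Ω] (μ : Measure Ω) [IsProbabilityMeasure μ]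
    (n : ℕ) (V X : Fin n → Ω → ℝ)
    (hV : ∀ i, MemLp (V i) 2 μ) (hX : ∀ i, MemLp (X i) 2 μ)
    (hVX : ∀ i, MemLp (fun ω => V i ω * (X i ω - ∫ ω', X i ω' ∂μ)) 2 μ)
    (hindep : IndepFun (fun ω => fun i => V i ω) (fun ω => fun i => X i ω) μ)
    (hmean : ∀ i, ∫ ω, V i ω ∂μ = 0)
    (a b : Fin n → ℝ) :
    cov μ (fun ω => ∑ i, a i * V i ω * (X i ω - ∫ ω', X i ω' ∂μ))
          (fun ω => ∑ j, b j * V j ω * (X j ω - ∫ ω', X j ω' ∂μ))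
      - cov μ (fun ω => ∑ i, a i * (X i ω - ∫ ω', X i ω' ∂μ))
              (fun ω => ∑ j, b j * (X j ω - ∫ ω', X j ω' ∂μ))
      = ∑ i, ∑ j, a i * b j * (cov μ (V i) (V j) - 1) * cov μ (X i) (X j) := by
  classical
  set c : Fin n → ℝ := fun i => ∫ ω', X i ω' ∂μ with hc
  set Y : Fin n → Ω → ℝ := fun i ω => X i ω - c i with hYdef
  -- basic integrability
  have hY2 : ∀ i, MemLp (Y i) 2 μ := fun i => (hX i).sub (memLp_const (c i))
  have hXint : ∀ i, Integrable (X i) μ := fun i => (hX i).integrable one_le_two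
  have hVint : ∀ i, Integrable (V i) μ := fun i => (hV i).integrable one_le_two
  have hYint : ∀ i, Integrable (Y i) μ := fun i => (hY2 i).integrable one_le_two
  have hEY : ∀ i, ∫ ω, Y i ω ∂μ = 0 := by
    intro i
    show ∫ ω, X i ω - c i ∂μ = 0
    rw [integral_sub (hXint i) (integrable_const (c i))]
    simp [hc]
  -- independence of products via composition
  have hVm : ∀ i, AEStronglyMeasurable (V i) μ := fun i => (hV i).1
  have indepVV_YY : ∀ i j : Fin n,
      IndepFun (fun ω => V i ω * V j ω) (fun ω => Y i ω * Y j ω) μ := by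
    intro i j
    have hφ : Measurable (fun v : Fin n → ℝ => v i * v j) :=
      (measurable_pi_apply i).mul (measurable_pi_apply j)
    have hψ : Measurable (fun x : Fin n → ℝ => (x i - c i) * (x j - c j)) :=
      ((measurable_pi_apply i).sub measurable_const).mul
        ((measurable_pi_apply j).sub measurable_const)
    exact hindep.comp hφ hψ
  have indepV_Y : ∀ i j : Fin n, IndepFun (V i) (Y j) μ := by
    intro i j
    have hφ : Measurable (fun v : Fin n → ℝ => v i) := measurable_pi_apply i
    have hψ : Measurable (fun x : Fin n → ℝ => x j - c j) :=
      (measurable_pi_apply j).sub measurable_const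
    exact hindep.comp hφ hψ
  -- key expectations
  have hEVY : ∀ i, ∫ ω, V i ω * Y i ω ∂μ = 0 := by
    intro i
    have := (indepV_Y i i).integral_mul_eq_mul_integral (hVint i).1 (hYint i).1
    simpa [Pi.mul_apply, hmean i] using this
  have hEVVYY : ∀ i j, ∫ ω, (V i ω * V j ω) * (Y i ω * Y j ω) ∂μ =
      (∫ ω, V i ω * V j ω ∂μ) * (∫ ω, Y i ω * Y j ω ∂μ) := by
    intro i j
    have := (indepVV_YY i j).integral_mul_eq_mul_integral
      (l2_mul_integrable (hV i) (hV j)).1 (l2_mul_integrable (hY2 i) (hY2 j)).1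
    simpa [Pi.mul_apply] using this
  -- cov of X in terms of Y
  have hcovX : ∀ i j, (∫ ω, X i ω * X j ω ∂μ) - (∫ ω, X i ω ∂μ) * (∫ ω, X j ω ∂μ)
      = ∫ ω, Y i ω * Y j ω ∂μ := by
    intro i j
    have expand : (fun ω => Y i ω * Y j ω) =
        fun ω => X i ω * X j ω - (c i * X j ω + c j * X i ω - c i * c j) := by
      funext ω; simp only [hYdef]; ring
    have ha1 : Integrable (fun ω => c i * X j ω) μ := (hXint j).const_mul (c i)
    have ha2 : Integrable (fun ω => c j * X i ω) μ := (hXint i).const_mul (c j)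
    have ha3 : Integrable (fun ω => c i * X j ω + c j * X i ω) μ := ha1.add ha2
    have ha4 : Integrable (fun ω => c i * X j ω + c j * X i ω - c i * c j) μ :=
      ha3.sub (integrable_const _)
    rw [expand,
      integral_sub (l2_mul_integrable (hX i) (hX j)) ha4,
      integral_sub ha3 (integrable_const _),
      integral_add ha1 ha2,
      integral_const_mul, integral_const_mul, integral_const]
    simp only [probReal_univ, one_smul]
    have hci : ∫ ω, X i ω ∂μ = c i := rfl
    have hcj : ∫ ω, X j ω ∂μ = c j := rfl
    rw [hci, hcj]
    ring
  -- integrability of the products in the big sums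
  have hVY2 : ∀ i, MemLp (fun ω => V i ω * Y i ω) 2 μ := fun i => hVX i
  have I1 : ∀ i j : Fin n, Integrable
      (fun ω => (a i * V i ω * Y i ω) * (b j * V j ω * Y j ω)) μ := by
    intro i j
    have := (l2_mul_integrable (hVY2 i) (hVY2 j)).const_mul (a i * b j)
    exact this.congr (Filter.Eventually.of_forall fun ω => by ring)
  have I2 : ∀ i j : Fin n, Integrable
      (fun ω => (a i * Y i ω) * (b j * Y j ω)) μ := by
    intro i j
    have := (l2_mul_integrable (hY2 i) (hY2 j)).const_mul (a i * b j)
    exact this.congr (Filter.Eventually.of_forall fun ω => by ring)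
  -- means of G, H, G*, H* vanish
  have hEGstar : ∫ ω, (∑ i, a i * V i ω * Y i ω) ∂μ = 0 := by
    rw [integral_finset_sum _ (fun i _ =>
      (((l2_mul_integrable (hV i) (hY2 i))).const_mul (a i)).congr
        (Filter.Eventually.of_forall fun ω => by ring))]
    refine Finset.sum_eq_zero fun i _ => ?_
    have : (fun ω => a i * V i ω * Y i ω) = fun ω => a i * (V i ω * Y i ω) := by
      funext ω; ring
    rw [this, integral_const_mul, hEVY i, mul_zero]
  have hEHstar : ∫ ω, (∑ j, b j * V j ω * Y j ω) ∂μ = 0 := by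
    rw [integral_finset_sum _ (fun i _ =>
      (((l2_mul_integrable (hV i) (hY2 i))).const_mul (b i)).congr
        (Filter.Eventually.of_forall fun ω => by ring))]
    refine Finset.sum_eq_zero fun i _ => ?_
    have : (fun ω => b i * V i ω * Y i ω) = fun ω => b i * (V i ω * Y i ω) := by
      funext ω; ring
    rw [this, integral_const_mul, hEVY i, mul_zero]
  have hEG : ∫ ω, (∑ i, a i * Y i ω) ∂μ = 0 := by
    rw [integral_finset_sum _ (fun i _ => (hYint i).const_mul (a i))]
    refine Finset.sum_eq_zero fun i _ => ?_
    rw [integral_const_mul, hEY i, mul_zero]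
  have hEH : ∫ ω, (∑ j, b j * Y j ω) ∂μ = 0 := by
    rw [integral_finset_sum _ (fun i _ => (hYint i).const_mul (b i))]
    refine Finset.sum_eq_zero fun i _ => ?_
    rw [integral_const_mul, hEY i, mul_zero]
  -- main expansions
  have expand1 : ∫ ω, (∑ i, a i * V i ω * Y i ω) * (∑ j, b j * V j ω * Y j ω) ∂μ
      = ∑ i, ∑ j, a i * b j * ((∫ ω, V i ω * V j ω ∂μ) * (∫ ω, Y i ω * Y j ω ∂μ)) := by
    rw [integral_sum_mul_sum μ _ _ I1]
    refine Finset.sum_congr rfl fun i _ => Finset.sum_congr rfl fun j _ => ?_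
    have : (fun ω => (a i * V i ω * Y i ω) * (b j * V j ω * Y j ω))
        = fun ω => (a i * b j) * ((V i ω * V j ω) * (Y i ω * Y j ω)) := by
      funext ω; ring
    rw [this, integral_const_mul, hEVVYY i j]
  have expand2 : ∫ ω, (∑ i, a i * Y i ω) * (∑ j, b j * Y j ω) ∂μ
      = ∑ i, ∑ j, a i * b j * (∫ ω, Y i ω * Y j ω ∂μ) := by
    rw [integral_sum_mul_sum μ _ _ I2]
    refine Finset.sum_congr rfl fun i _ => Finset.sum_congr rfl fun j _ => ?_
    have : (fun ω => (a i * Y i ω) * (b j * Y j ω))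
        = fun ω => (a i * b j) * (Y i ω * Y j ω) := by
      funext ω; ring
    rw [this, integral_const_mul]
  -- put everything together
  simp only [cov]
  rw [expand1, expand2, hEGstar, hEHstar, hEG, hEH]
  simp only [mul_zero, sub_zero]
  rw [← Finset.sum_sub_distrib]
  refine Finset.sum_congr rfl fun i _ => ?_
  rw [← Finset.sum_sub_distrib]
  refine Finset.sum_congr rfl fun j _ => ?_
  rw [hcovX i j, hmean i, hmean j]
  ring
end
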